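/- arXiv:2507.22425 — 11 statements merged into one kernel-verified Lean document; each statement's English description precedes it below -/
import Mathlib

section
/- Let p and q be real polynomials with deg p = s and deg q = s−1, all zeros of p and q real and simple. If the real zeros of p strictly interlace the real zeros of q, then for every real λ the polynomial p + λq has only real and simple zeros. -/
/-!
At a zero `y i` of `q` the polynomial `r = p + λ q` takes the value `p (y i)`. Exactly `s - 1 - i`
zeros of `p` lie to the right of `y i`, so this value has the sign of `(-1) ^ (s - 1 - i)` times
the leading coefficient of `p`, which is also the leading coefficient of `r`. Adding the signs of
`r` near `-∞` and `+∞`, the degree-`s` polynomial `r` changes sign `s` times along the real line,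
so it has `s` distinct real zeros, and these are all of its zeros.
-/

open Polynomial Filter Asymptotics

namespace Polynomial

variable {P : ℝ[X]}

theorem eventually_atTop_leadingCoeff_mul_eval_pos (hP : P ≠ 0) :
    ∀ᶠ t in atTop, 0 < P.leadingCoeff * P.eval t := by
  have hlc : P.leadingCoeff ≠ 0 := leadingCoeff_ne_zero.mpr hP
  refine ((IsEquivalent.refl (u := fun _ ↦ P.leadingCoeff)).mul
    P.isEquivalent_atTop_lead).eventually_pos ?_
  filter_upwards [eventually_gt_atTop 0] with t ht
  have := pow_pos ht P.natDegree
  calc (0 : ℝ) < P.leadingCoeff ^ 2 * t ^ P.natDegree := by positivity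
    _ = _ := by simp only [Pi.mul_apply]; ring

theorem eventually_atBot_negOnePow_mul_leadingCoeff_mul_eval_pos (hP : P ≠ 0) :
    ∀ᶠ t in atBot, 0 < (-1) ^ P.natDegree * P.leadingCoeff * P.eval t := by
  have hlc : P.leadingCoeff ≠ 0 := leadingCoeff_ne_zero.mpr hP
  refine ((IsEquivalent.refl (u := fun _ ↦ (-1) ^ P.natDegree * P.leadingCoeff)).mul
    P.isEquivalent_atBot_lead).eventually_pos ?_
  filter_upwards [eventually_lt_atBot 0] with t ht
  have := pow_pos (neg_pos.mpr ht) P.natDegree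
  calc (0 : ℝ) < P.leadingCoeff ^ 2 * (-t) ^ P.natDegree := by positivity
    _ = _ := by simp only [Pi.mul_apply, neg_pow t]; ring

theorem exists_isRoot_mem_Ioo_of_eval_mul_eval_neg {a b : ℝ} (hab : a ≤ b)
    (h : P.eval a * P.eval b < 0) : ∃ z ∈ Set.Ioo a b, P.IsRoot z := by
  have hzero : (0 : ℝ) ∈ Set.uIcc (P.eval a) (P.eval b) := by
    rcases mul_neg_iff.mp h with h | h
    · exact Set.mem_uIcc.mpr (Or.inr ⟨h.2.le, h.1.le⟩)
    · exact Set.mem_uIcc.mpr (Or.inl ⟨h.1.le, h.2.le⟩)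
  obtain ⟨z, hz, hPz⟩ := intermediate_value_uIcc P.continuous.continuousOn hzero
  rw [Set.uIcc_of_le hab] at hz
  refine ⟨z, ⟨hz.1.lt_of_ne ?_, hz.2.lt_of_ne ?_⟩, hPz⟩ <;> rintro rfl <;> simp_all

theorem negOnePow_card_filter_lt_mul_leadingCoeff_mul_eval_pos
    (hroots : P.roots.card = P.natDegree) {t : ℝ} (ht : ¬P.IsRoot t) :
    0 < (-1) ^ (P.roots.filter (t < ·)).card * P.leadingCoeff * P.eval t := by
  have hP : P ≠ 0 := by rintro rfl; exact ht (by simp)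
  set A := P.roots.filter (t < ·)
  set B := P.roots.filter (fun a ↦ ¬t < a)
  have heval : P.eval t = P.leadingCoeff *
      ((-1) ^ A.card * (A.map (· - t)).prod * (B.map (t - ·)).prod) := by
    conv_lhs => rw [← C_leadingCoeff_mul_prod_multiset_X_sub_C hroots]
    rw [← Multiset.filter_add_not (t < ·) P.roots, ← Multiset.card_map (· - t) A,
      ← Multiset.prod_map_neg]
    simp [eval_multiset_prod, Multiset.map_map, A, B]
  have hA : 0 < (A.map (· - t)).prod := Multiset.prod_pos fun a ha ↦ by
    obtain ⟨b, hb, rfl⟩ := Multiset.mem_map.mp ha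
    exact sub_pos.mpr (Multiset.mem_filter.mp hb).2
  have hB : 0 < (B.map (t - ·)).prod := Multiset.prod_pos fun a ha ↦ by
    obtain ⟨b, hb, rfl⟩ := Multiset.mem_map.mp ha
    obtain ⟨hroot, hle⟩ := Multiset.mem_filter.mp hb
    have hne : b ≠ t := fun h ↦ ht (h ▸ (mem_roots hP).mp hroot)
    exact sub_pos.mpr ((not_lt.mp hle).lt_of_ne hne)
  have hsq : ((-1 : ℝ) ^ A.card) ^ 2 = 1 := by rw [← pow_mul, pow_mul', neg_one_sq, one_pow]
  have hlc : P.leadingCoeff ≠ 0 := leadingCoeff_ne_zero.mpr hP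
  rw [heval]
  calc (0 : ℝ) < P.leadingCoeff ^ 2 * ((A.map (· - t)).prod * (B.map (t - ·)).prod) := by
        positivity
    _ = _ := by linear_combination (-(P.leadingCoeff ^ 2 * (A.map (· - t)).prod *
        (B.map (t - ·)).prod)) * hsq

theorem card_roots_eq_and_nodup_of_sign_changes {m : ℕ} (hdeg : P.natDegree ≤ m)
    {t : ℕ → ℝ} (ht : ∀ k < m, t k < t (k + 1)) {c : ℝ}
    (hsign : ∀ k ≤ m, 0 < (-1) ^ (m - k) * c * P.eval (t k)) :
    P.roots.card = m ∧ P.roots.Nodup := by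
  have hP : P ≠ 0 := by rintro rfl; simpa using hsign 0 (Nat.zero_le m)
  have hgap : ∀ k < m, ∃ z ∈ Set.Ioo (t k) (t (k + 1)), P.IsRoot z := by
    intro k hk
    refine exists_isRoot_mem_Ioo_of_eval_mul_eval_neg (ht k hk).le ?_
    have h₁ := hsign k hk.le
    have h₂ := hsign (k + 1) hk
    rw [show m - k = m - (k + 1) + 1 by omega, pow_succ] at h₁
    have hsq : ((-1 : ℝ) ^ (m - (k + 1))) ^ 2 = 1 := by
      rw [← pow_mul, pow_mul', neg_one_sq, one_pow]
    have hprod : c ^ 2 * (P.eval (t k) * P.eval (t (k + 1))) < 0 := by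
      linear_combination mul_pos h₁ h₂ - (c ^ 2 * P.eval (t k) * P.eval (t (k + 1))) * hsq
    exact neg_of_mul_neg_right hprod (sq_nonneg c)
  choose! z hz hroot using hgap
  have htmono : StrictMonoOn t (Set.Iic m) :=
    strictMonoOn_Iic_of_lt_succ fun k hk ↦ Order.succ_eq_add_one k ▸ ht k hk
  have hzinj : Set.InjOn z (Set.Iio m) := by
    refine StrictMonoOn.injOn fun j hj k hk hjk ↦ ?_
    calc z j < t (j + 1) := (hz j hj).2
      _ ≤ t k := htmono.monotoneOn (Set.mem_Iic.mpr hj) (Set.mem_Iic.mpr hk.le) hjk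
      _ < z k := (hz k hk).1
  have hnodup : ((Multiset.range m).map z).Nodup :=
    (Multiset.nodup_range m).map_on fun j hj k hk ↦
      hzinj (Multiset.mem_range.mp hj) (Multiset.mem_range.mp hk)
  have hle : (Multiset.range m).map z ≤ P.roots :=
    (Multiset.le_iff_subset hnodup).mpr fun a ha ↦ by
      obtain ⟨k, hk, rfl⟩ := Multiset.mem_map.mp ha
      exact (mem_roots hP).mpr (hroot k (Multiset.mem_range.mp hk))
  have hroots := Multiset.eq_of_le_of_card_le hle (by simpa using P.card_roots'.trans hdeg)
  rw [← hroots]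
  exact ⟨by simp, hnodup⟩

theorem card_roots_eq_and_nodup_of_alternating_signs {n : ℕ} (hdeg : P.natDegree = n + 1)
    {y : ℕ → ℝ} (hy : StrictMonoOn y (Set.Iio n))
    (hsign : ∀ i < n, 0 < (-1) ^ (n - i) * P.leadingCoeff * P.eval (y i)) :
    P.roots.card = n + 1 ∧ P.roots.Nodup := by
  have hP : P ≠ 0 := ne_zero_of_natDegree_gt (n := 0) (by omega)
  obtain ⟨a, hsa, ha⟩ := ((eventually_atBot_negOnePow_mul_leadingCoeff_mul_eval_pos hP).and
    (eventually_lt_atBot (y 0))).exists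
  obtain ⟨b, hsb, hb⟩ := ((eventually_atTop_leadingCoeff_mul_eval_pos hP).and
    (eventually_gt_atTop (y (n - 1)))).exists
  rw [hdeg] at hsa
  -- for `n = 0` both sides are `y 0`, and `a < y 0 < b` still orders the two checkpoints
  have hy0 : y 0 ≤ y (n - 1) := by
    rcases Nat.eq_zero_or_pos n with rfl | hn
    · rfl
    · exact hy.monotoneOn (by simpa) (by simp; omega) (Nat.zero_le _)
  refine card_roots_eq_and_nodup_of_sign_changes hdeg.le (c := P.leadingCoeff)
    (t := fun k ↦ if k = 0 then a else if k ≤ n then y (k - 1) else b) ?_ ?_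
  · intro k hk
    rcases Nat.eq_zero_or_pos k with rfl | hk0
    · by_cases hn : 1 ≤ n
      · simpa [hn] using ha
      · simp only [hn, zero_add, one_ne_zero, ↓reduceIte]
        linarith
    · by_cases hkn : k + 1 ≤ n
      · simp only [hk0.ne', hkn, show k ≤ n by omega, ↓reduceIte, Nat.add_one_ne_zero]
        exact hy (by simp; omega) (by simp; omega) (by omega)
      · simp only [hk0.ne', hkn, show k ≤ n by omega, ↓reduceIte, Nat.add_one_ne_zero]
        rwa [show k - 1 = n - 1 by omega]
  · intro k hk
    rcases Nat.eq_zero_or_pos k with rfl | hk0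
    · simpa using hsa
    · by_cases hkn : k ≤ n
      · simp only [hk0.ne', hkn, ↓reduceIte]
        simpa [show n + 1 - k = n - (k - 1) by omega] using hsign (k - 1) (by omega)
      · simpa [hk0.ne', hkn, show n + 1 - k = 0 by omega] using hsb

section Interlacing

variable {s i : ℕ} {x : ℕ → ℝ} {u : ℝ}

theorem lt_apply_iff_of_mem_Ioo (hx : StrictMonoOn x (Set.Iio s)) (hi : i + 1 < s)
    (hu : u ∈ Set.Ioo (x i) (x (i + 1))) {j : ℕ} (hj : j < s) : u < x j ↔ i + 1 ≤ j := by
  refine ⟨fun h ↦ ?_, fun h ↦ hu.2.trans_le ((hx.le_iff_le hi hj).mpr h)⟩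
  by_contra! hji
  have := (hx.le_iff_le hj (show i < s by omega)).mpr (by omega)
  linarith [hu.1]

theorem negOnePow_mul_leadingCoeff_mul_eval_pos_of_mem_Ioo (hx : StrictMonoOn x (Set.Iio s))
    (hroots : P.roots = (Multiset.range s).map x) (hdeg : P.natDegree = s) (hi : i + 1 < s)
    (hu : u ∈ Set.Ioo (x i) (x (i + 1))) :
    0 < (-1) ^ (s - (i + 1)) * P.leadingCoeff * P.eval u := by
  have hP : P ≠ 0 := ne_zero_of_natDegree_gt (n := 0) (by omega)
  have hsplit : P.roots.card = P.natDegree := by simp [hroots, hdeg]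
  have hnotroot : ¬P.IsRoot u := by
    intro hroot
    obtain ⟨j, hj, rfl⟩ := Multiset.mem_map.mp (hroots ▸ (mem_roots hP).mpr hroot)
    have hj := Multiset.mem_range.mp hj
    have := (lt_apply_iff_of_mem_Ioo hx hi hu hj).not.mp (lt_irrefl _)
    have := (hx.le_iff_le hj (show i < s by omega)).mpr (by omega)
    linarith [hu.1]
  have hcard : (P.roots.filter (u < ·)).card = s - (i + 1) := by
    rw [hroots, Multiset.filter_map, Multiset.card_map]
    trans ((Multiset.range s).filter (i + 1 ≤ ·)).card
    · congr 1
      exact Multiset.filter_congr fun j hj ↦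
        lt_apply_iff_of_mem_Ioo hx hi hu (Multiset.mem_range.mp hj)
    change ((Finset.range s).filter (i + 1 ≤ ·)).card = _
    rw [show (Finset.range s).filter (i + 1 ≤ ·) = Finset.Ico (i + 1) s by ext; simp; omega]
    simp
  simpa [hcard] using negOnePow_card_filter_lt_mul_leadingCoeff_mul_eval_pos hsplit hnotroot

end Interlacing

end Polynomial

/-- Obreshkov-type theorem, converse direction: if `p` has degree `s`, `q` has degree
`s-1`, all zeros of both are real and simple, and the zeros of `p` strictly interlace
the zeros of `q`, then for every real `λ` the polynomial `p + λ q` has only real and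
simple zeros. -/
theorem stmt_0 (s : ℕ) (hs : 1 ≤ s) (p q : Polynomial ℝ)
    (hpdeg : p.natDegree = s) (hqdeg : q.natDegree = s - 1)
    (x y : ℕ → ℝ)
    (hx : StrictMonoOn x (Set.Iio s)) (hy : StrictMonoOn y (Set.Iio (s - 1)))
    (hpr : p.roots = (Multiset.range s).map x)
    (hqr : q.roots = (Multiset.range (s - 1)).map y)
    (hint : ∀ i, i + 1 < s → x i < y i ∧ y i < x (i + 1)) :
    ∀ lam : ℝ, (p + Polynomial.C lam * q).roots.card = s ∧
      (p + Polynomial.C lam * q).roots.Nodup := by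
  intro lam
  obtain ⟨n, rfl⟩ : ∃ n, s = n + 1 := ⟨s - 1, by omega⟩
  rw [Nat.add_sub_cancel] at hqdeg hy hqr
  have hlower : (C lam * q).natDegree < p.natDegree :=
    (natDegree_C_mul_le lam q).trans_lt (by omega)
  refine card_roots_eq_and_nodup_of_alternating_signs
    ((natDegree_add_eq_left_of_natDegree_lt hlower).trans hpdeg) hy fun i hi ↦ ?_
  have hqy : q.IsRoot (y i) :=
    isRoot_of_mem_roots (hqr ▸ Multiset.mem_map_of_mem y (Multiset.mem_range.mpr hi))
  rw [leadingCoeff_add_of_degree_lt' (degree_lt_degree hlower), eval_add, eval_mul, hqy.eq_zero,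
    mul_zero, add_zero]
  simpa using negOnePow_mul_leadingCoeff_mul_eval_pos_of_mem_Ioo hx hpr hpdeg (by omega)
    (hint i (by omega))
end

section
/- Let p and q be real polynomials with no common zeros, p having exactly s real zeros and q having exactly s−1 real zeros, all simple. If for every real λ all real zeros of p + λq are simple, then the real zeros of p strictly interlace the real zeros of q. -/
open Polynomial

/-!
If no zero of `q` lay between two consecutive zeros `a < b` of `p`, Rolle's theorem applied to
`p / q` on `[a, b]` would give `c ∈ (a, b)` at which the Wronskian `q p' - q' p` vanishes; then `c`
is a double zero of `p - (p(c) / q(c)) q`. Hence each of the `s - 1` gaps between consecutive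
zeros of `p` contains a zero of `q`, and since `q` has exactly `s - 1` zeros, these are all of them.
-/

theorem Multiset.eq_map_range_of_injOn {α : Type*} {M : Multiset α} {n : ℕ} {x : ℕ → α}
    (hcard : M.card = n) (hmem : ∀ i < n, x i ∈ M) (hinj : Set.InjOn x (Set.Iio n)) :
    M = (Multiset.range n).map x := by
  have hnodup : ((Multiset.range n).map x).Nodup :=
    (Multiset.nodup_range n).map_on fun i hi j hj ↦
      hinj (Multiset.mem_range.1 hi) (Multiset.mem_range.1 hj)
  have hle : (Multiset.range n).map x ≤ M := by
    rw [Multiset.le_iff_subset hnodup]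
    intro _ ha
    obtain ⟨i, hi, rfl⟩ := Multiset.mem_map.1 ha
    exact hmem i (Multiset.mem_range.1 hi)
  exact (Multiset.eq_of_le_of_card_le hle (by simp [hcard])).symm

theorem Multiset.exists_strictMonoOn_eq_map_range {α : Type*} [LinearOrder α] [Nonempty α]
    {M : Multiset α} {n : ℕ} (hcard : M.card = n) (hnodup : M.Nodup) :
    ∃ x : ℕ → α, StrictMonoOn x (Set.Iio n) ∧ M = (Multiset.range n).map x := by
  classical
  have hcardF : M.toFinset.card = n := by rw [Multiset.toFinset_card_of_nodup hnodup, hcard]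
  let e := M.toFinset.orderEmbOfFin hcardF
  let x : ℕ → α := fun i ↦ if h : i < n then e ⟨i, h⟩ else Classical.arbitrary α
  have hx : ∀ i (h : i < n), x i = e ⟨i, h⟩ := fun i h ↦ dif_pos h
  have hmono : StrictMonoOn x (Set.Iio n) := fun i hi j hj hij ↦ by
    rw [hx i hi, hx j hj]
    exact e.strictMono (Fin.mk_lt_mk.2 hij)
  refine ⟨x, hmono, Multiset.eq_map_range_of_injOn hcard (fun i hi ↦ ?_) hmono.injOn⟩
  rw [hx i hi, ← Multiset.mem_toFinset]
  exact M.toFinset.orderEmbOfFin_mem hcardF _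

theorem strictMonoOn_of_interlacing {α : Type*} [Preorder α] {x y : ℕ → α} {n : ℕ}
    (hx : MonotoneOn x (Set.Iio n)) (hxy : ∀ i, i + 1 < n → x i < y i ∧ y i < x (i + 1)) :
    StrictMonoOn y (Set.Iio (n - 1)) := by
  intro i hi j hj hij
  simp only [Set.mem_Iio] at hi hj
  calc y i < x (i + 1) := (hxy i (by omega)).2
    _ ≤ x j := hx (by simp; omega) (by simp; omega) hij
    _ < y j := (hxy j (by omega)).1

namespace Polynomial

theorem not_nodup_roots_of_isRoot_derivative {R : Type*} [CommRing R] [IsDomain R]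
    {g : R[X]} {c : R} (hg : g ≠ 0) (hc : g.IsRoot c) (hc' : g.derivative.IsRoot c) :
    ¬ g.roots.Nodup := by
  classical
  intro hnodup
  have hmult := (one_lt_rootMultiplicity_iff_isRoot hg).2 ⟨hc, hc'⟩
  have := Multiset.nodup_iff_count_le_one.1 hnodup c
  rw [count_roots] at this
  omega

theorem add_C_mul_ne_zero_of_isRoot {R : Type*} [CommRing R] [IsDomain R] {p q : R[X]} {a : R}
    (hp : p ≠ 0) (ha : p.IsRoot a) (hqa : ¬ q.IsRoot a) (lam : R) : p + C lam * q ≠ 0 := by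
  intro h
  have hlam : lam * q.eval a = 0 := by simpa [ha.eq_zero] using congrArg (eval a) h
  rcases mul_eq_zero.1 hlam with rfl | hq
  · exact hp (by simpa using h)
  · exact hqa hq

theorem isRoot_add_C_mul_of_isRoot_wronskian {K : Type*} [Field K] {p q : K[X]} {c : K}
    (hq : ¬ q.IsRoot c) (hW : (wronskian q p).IsRoot c) :
    ∃ lam : K, (p + C lam * q).IsRoot c ∧ (p + C lam * q).derivative.IsRoot c := by
  have hq : q.eval c ≠ 0 := hq
  -- with `λ = -p(c) / q(c)`, the derivative of `p + λ q` at `c` is `W(q, p)(c) / q(c)`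
  refine ⟨-(p.eval c / q.eval c), ?_, ?_⟩
  · simp only [IsRoot, eval_add, eval_mul, eval_C]
    field_simp [hq]
    ring
  · simp only [IsRoot, wronskian, eval_sub, eval_mul] at hW
    simp only [IsRoot, derivative_add, derivative_C_mul, eval_add, eval_mul, eval_C]
    field_simp [hq]
    linear_combination hW

theorem exists_isRoot_wronskian_of_isRoot {p q : ℝ[X]} {a b : ℝ} (hab : a < b)
    (ha : p.IsRoot a) (hb : p.IsRoot b) (hq : ∀ t ∈ Set.Icc a b, ¬ q.IsRoot t) :
    ∃ c ∈ Set.Ioo a b, (wronskian q p).IsRoot c := by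
  have hcont : ContinuousOn (fun t ↦ p.eval t / q.eval t) (Set.Icc a b) :=
    p.continuous.continuousOn.div q.continuous.continuousOn hq
  obtain ⟨c, hc, hderiv⟩ := exists_hasDerivAt_eq_zero hab hcont (by simp [ha.eq_zero, hb.eq_zero])
    fun t ht ↦ (p.hasDerivAt t).div (q.hasDerivAt t) (hq t (Set.Ioo_subset_Icc_self ht))
  refine ⟨c, hc, ?_⟩
  rw [div_eq_zero_iff, or_iff_left (pow_ne_zero 2 (hq c (Set.Ioo_subset_Icc_self hc)))] at hderiv
  simp only [IsRoot, wronskian, eval_sub, eval_mul]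
  linarith

theorem exists_isRoot_between_of_nodup_roots_add_C_mul {p q : ℝ[X]} (hp : p ≠ 0)
    (hsimple : ∀ lam : ℝ, (p + C lam * q).roots.Nodup) {a b : ℝ} (hab : a < b)
    (ha : p.IsRoot a) (hb : p.IsRoot b) (hqa : ¬ q.IsRoot a) (hqb : ¬ q.IsRoot b) :
    ∃ c ∈ Set.Ioo a b, q.IsRoot c := by
  by_contra! h
  have hq : ∀ t ∈ Set.Icc a b, ¬ q.IsRoot t := by
    rintro t ⟨hat, htb⟩
    rcases hat.eq_or_lt with rfl | hat
    · exact hqa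
    rcases htb.eq_or_lt with rfl | htb
    · exact hqb
    exact h t ⟨hat, htb⟩
  obtain ⟨c, hc, hW⟩ := exists_isRoot_wronskian_of_isRoot hab ha hb hq
  obtain ⟨lam, hroot, hroot'⟩ := isRoot_add_C_mul_of_isRoot_wronskian
    (hq c (Set.Ioo_subset_Icc_self hc)) hW
  exact not_nodup_roots_of_isRoot_derivative (add_C_mul_ne_zero_of_isRoot hp ha hqa lam)
    hroot hroot' (hsimple lam)

end Polynomial

theorem stmt_1_general (s : ℕ) (p q : Polynomial ℝ) (hp0 : p ≠ 0) (hq0 : q ≠ 0)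
    (hcommon : ∀ t : ℝ, ¬(p.IsRoot t ∧ q.IsRoot t))
    (hpr : p.roots.card = s) (hps : p.roots.Nodup)
    (hqr : q.roots.card = s - 1)
    (hsimple : ∀ lam : ℝ, (p + Polynomial.C lam * q).roots.Nodup) :
    ∃ x y : ℕ → ℝ, StrictMonoOn x (Set.Iio s) ∧ StrictMonoOn y (Set.Iio (s - 1)) ∧
      p.roots = (Multiset.range s).map x ∧ q.roots = (Multiset.range (s - 1)).map y ∧
      ∀ i, i + 1 < s → x i < y i ∧ y i < x (i + 1) := by
  obtain ⟨x, hx, hpx⟩ := Multiset.exists_strictMonoOn_eq_map_range hpr hps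
  have hroot : ∀ i < s, p.IsRoot (x i) := fun i hi ↦
    isRoot_of_mem_roots (hpx ▸ Multiset.mem_map_of_mem x (Multiset.mem_range.2 hi))
  have hbetween : ∀ i, i + 1 < s → ∃ c ∈ Set.Ioo (x i) (x (i + 1)), q.IsRoot c := fun i hi ↦
    exists_isRoot_between_of_nodup_roots_add_C_mul hp0 hsimple (hx (by simp; omega) hi (by simp))
      (hroot i (by omega)) (hroot (i + 1) hi) (hcommon _ ⟨hroot i (by omega), ·⟩)
      (hcommon _ ⟨hroot (i + 1) hi, ·⟩)
  choose! y hy hqy using hbetween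
  have hy_mono := strictMonoOn_of_interlacing hx.monotoneOn hy
  refine ⟨x, y, hx, hy_mono, hpx, ?_, hy⟩
  refine Multiset.eq_map_range_of_injOn hqr (fun i hi ↦ ?_) hy_mono.injOn
  exact (mem_roots hq0).2 (hqy i (by omega))

/-- Obreshkov-type theorem: if `p` and `q` have no common zeros, `p` has exactly `s`
real zeros and `q` exactly `s-1` real zeros, all simple, and for every real `λ` all
real zeros of `p + λ q` are simple, then the real zeros of `p` strictly interlace the
real zeros of `q`. -/
theorem stmt_1 (s : ℕ) (hs : 1 ≤ s) (p q : Polynomial ℝ) (hp0 : p ≠ 0) (hq0 : q ≠ 0)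
    (hcommon : ∀ t : ℝ, ¬(p.IsRoot t ∧ q.IsRoot t))
    (hpr : p.roots.card = s) (hps : p.roots.Nodup)
    (hqr : q.roots.card = s - 1) (hqs : q.roots.Nodup)
    (hsimple : ∀ lam : ℝ, (p + Polynomial.C lam * q).roots.Nodup) :
    ∃ x y : ℕ → ℝ, StrictMonoOn x (Set.Iio s) ∧ StrictMonoOn y (Set.Iio (s - 1)) ∧
      p.roots = (Multiset.range s).map x ∧ q.roots = (Multiset.range (s - 1)).map y ∧
      ∀ i, i + 1 < s → x i < y i ∧ y i < x (i + 1) :=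
  stmt_1_general s p q hp0 hq0 hcommon hpr hps hqr hsimple
end

section
/- For α > 0, if a real polynomial p has all its zeros positive and simple, then the polynomial Λ_α p defined by (Λ_α p)(x) = x p'(x) + (α − x) p(x) has all its zeros positive and simple, and the zeros of Λ_α p interlace the zeros of p. -/
/-!
Put `t₀ = 0 < x₀ < ⋯ < xₙ₋₁ < tₙ₊₁ = M` with `M` large, `q = Λ_α p` and `c` the leading
coefficient of `p`. Then `q(0) = α p(0)` has the sign of `(-1)ⁿ c`, `q(xᵢ) = xᵢ p'(xᵢ)` has the
sign of `(-1)ⁿ⁻¹⁻ⁱ c` because exactly `n - 1 - i` roots of `p` exceed `xᵢ`, and `q(M)` has the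
sign `-c` of the leading coefficient of `q`. The signs alternate along the `n + 2` points, so the
intermediate value theorem gives a zero of `q` in each of the `n + 1` gaps; as `deg q = n + 1`
these are all the zeros of `q`.
-/

open Polynomial Finset Filter

theorem neg_one_pow_card_mul_prod_pos {ι R : Type*} [DecidableEq ι] [CommRing R] [PartialOrder R]
    [IsStrictOrderedRing R] {s u : Finset ι} {g : ι → R} (hu : u ⊆ s)
    (hneg : ∀ j ∈ u, g j < 0) (hpos : ∀ j ∈ s \ u, 0 < g j) :
    0 < (-1) ^ #u * ∏ j ∈ s, g j := by
  rw [← prod_sdiff hu, mul_left_comm, ← prod_neg]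
  exact mul_pos (prod_pos hpos) (prod_pos fun j hj => neg_pos.2 (hneg j hj))

theorem exists_mem_Ioo_eq_zero_of_mul_neg {f : ℝ → ℝ} {a b : ℝ} (hab : a < b)
    (hf : ContinuousOn f (Set.Icc a b)) (h : f a * f b < 0) : ∃ z ∈ Set.Ioo a b, f z = 0 := by
  rcases mul_neg_iff.1 h with ⟨ha, hb⟩ | ⟨ha, hb⟩
  · exact intermediate_value_Ioo' hab.le hf ⟨hb, ha⟩
  · exact intermediate_value_Ioo hab.le hf ⟨ha, hb⟩

theorem exists_strictMonoOn_zeros_of_alternating {f : ℝ → ℝ} (hf : Continuous f) {m : ℕ}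
    {t : ℕ → ℝ} (ht : StrictMonoOn t (Set.Iic m)) {s : ℝ}
    (hs : ∀ k ≤ m, 0 < (-1) ^ (m - k) * s * f (t k)) :
    ∃ y : ℕ → ℝ, StrictMonoOn y (Set.Iio m) ∧
      ∀ k < m, y k ∈ Set.Ioo (t k) (t (k + 1)) ∧ f (y k) = 0 := by
  have hzero : ∀ k < m, ∃ z ∈ Set.Ioo (t k) (t (k + 1)), f z = 0 := by
    intro k hk
    have hleft := hs k hk.le
    have hright := hs (k + 1) hk
    rw [show m - k = m - (k + 1) + 1 by omega, pow_succ] at hleft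
    set u := (-1 : ℝ) ^ (m - (k + 1)) * s
    have hsign : f (t k) * f (t (k + 1)) < 0 := by
      nlinarith [mul_pos (show 0 < -(u * f (t k)) by linarith) hright, sq_nonneg u]
    have hstep : t k < t (k + 1) :=
      ht (Set.mem_Iic.2 hk.le) (Set.mem_Iic.2 hk) (Nat.lt_succ_self k)
    exact exists_mem_Ioo_eq_zero_of_mul_neg hstep hf.continuousOn hsign
  choose! y hy using hzero
  refine ⟨y, fun a ha b hb hab => ?_, hy⟩
  calc y a < t (a + 1) := (hy a ha).1.2
    _ ≤ t b := ht.monotoneOn (Set.mem_Iic.2 (hab.trans hb)) (Set.mem_Iic.2 hb.out.le) hab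
    _ < y b := (hy b hb).1.1

theorem exists_interlacing_zeros {f : ℝ → ℝ} (hf : Continuous f) {n : ℕ} {x : ℕ → ℝ}
    (hx : StrictMonoOn x (Set.Iio n)) {a b s : ℝ} (hab : a < b) (ha : ∀ i < n, a < x i)
    (hb : ∀ i < n, x i < b) (hfa : 0 < (-1) ^ (n + 1) * s * f a)
    (hfx : ∀ i < n, 0 < (-1) ^ (n - i) * s * f (x i)) (hfb : 0 < s * f b) :
    ∃ y : ℕ → ℝ, StrictMonoOn y (Set.Iio (n + 1)) ∧ (∀ i < n + 1, a < y i ∧ f (y i) = 0) ∧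
      ∀ i < n, y i < x i ∧ x i < y (i + 1) := by
  let t : ℕ → ℝ := fun
    | 0 => a
    | i + 1 => if i < n then x i else b
  have ht : StrictMonoOn t (Set.Iic (n + 1)) := by
    refine strictMonoOn_Iic_of_lt_succ fun k hk => ?_
    rcases k with _ | i
    · by_cases h : 0 < n <;> simp [t, h, ha, hab]
    · have hi : i < n := by omega
      by_cases h : i + 1 < n
      · simpa [t, hi, h] using hx hi h (Nat.lt_succ_self i)
      · simpa [t, hi, h] using hb i hi
  have hsign : ∀ k ≤ n + 1, 0 < (-1) ^ (n + 1 - k) * s * f (t k) := by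
    rintro (_ | i) hi
    · simpa [t] using hfa
    · rcases Nat.lt_or_ge i n with h | h
      · simpa [t, h, show n + 1 - (i + 1) = n - i by omega] using hfx i h
      · simpa [t, show i = n by omega] using hfb
  obtain ⟨y, hy_mono, hy⟩ := exists_strictMonoOn_zeros_of_alternating hf ht hsign
  refine ⟨y, hy_mono, fun i hi => ⟨?_, (hy i hi).2⟩, fun i hi => ⟨?_, ?_⟩⟩
  · calc a = t 0 := rfl
      _ ≤ t i := ht.monotoneOn (by simp) (by simpa using hi.le) (Nat.zero_le i)
      _ < y i := (hy i hi).1.1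
  · simpa [t, hi] using (hy i (by omega)).1.2
  · simpa [t, hi] using (hy (i + 1) (by omega)).1.1

theorem eventually_atTop_leadingCoeff_mul_eval_pos {q : ℝ[X]} (hq : 0 < q.degree) :
    ∀ᶠ t in atTop, 0 < q.leadingCoeff * eval t q := by
  have hlc : q.leadingCoeff ≠ 0 := leadingCoeff_ne_zero.2 (ne_zero_of_degree_gt hq)
  have hlim : Tendsto (fun t => eval t (C q.leadingCoeff * q)) atTop atTop := by
    refine tendsto_atTop_of_leadingCoeff_nonneg _ ?_ ?_
    · rwa [degree_C_mul hlc]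
    · simpa using mul_self_nonneg q.leadingCoeff
  simpa using hlim.eventually_gt_atTop 0

theorem roots_eq_map_range_of_injOn {R : Type*} [CommRing R] [IsDomain R] {q : R[X]}
    (hq : q ≠ 0) {m : ℕ} (hdeg : q.natDegree ≤ m) {y : ℕ → R} (hy : Set.InjOn y (Set.Iio m))
    (hroot : ∀ i < m, q.IsRoot (y i)) : q.roots = (Multiset.range m).map y := by
  have hnodup : ((Multiset.range m).map y).Nodup :=
    (Multiset.nodup_range m).map_on fun a ha b hb =>
      hy (by simpa using ha) (by simpa using hb)
  refine (Multiset.eq_of_le_of_card_le ((Multiset.le_iff_subset hnodup).2 ?_) ?_).symm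
  · intro z hz
    obtain ⟨i, hi, rfl⟩ := Multiset.mem_map.1 hz
    exact (mem_roots hq).2 (hroot i (Multiset.mem_range.1 hi))
  · simpa using q.card_roots'.trans hdeg

section Factorization

variable {R : Type*} [CommRing R] [IsDomain R] {p : R[X]} {n : ℕ} {x : ℕ → R}

theorem eq_C_leadingCoeff_mul_nodal (hn : p.natDegree = n)
    (hpr : p.roots = (Multiset.range n).map x) :
    p = C p.leadingCoeff * Lagrange.nodal (range n) x := by
  have hcard : Multiset.card p.roots = p.natDegree := by simp [hpr, hn]
  conv_lhs => rw [← C_leadingCoeff_mul_prod_multiset_X_sub_C hcard, hpr, Multiset.map_map]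
  rfl

theorem eval_eq_leadingCoeff_mul_prod (hn : p.natDegree = n)
    (hpr : p.roots = (Multiset.range n).map x) (t : R) :
    eval t p = p.leadingCoeff * ∏ j ∈ range n, (t - x j) := by
  conv_lhs => rw [eq_C_leadingCoeff_mul_nodal hn hpr]
  rw [eval_mul, eval_C, Lagrange.eval_nodal]

theorem eval_derivative_eq_leadingCoeff_mul_prod (hn : p.natDegree = n)
    (hpr : p.roots = (Multiset.range n).map x) {i : ℕ} (hi : i < n) :
    eval (x i) (derivative p) = p.leadingCoeff * ∏ j ∈ (range n).erase i, (x i - x j) := by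
  conv_lhs => rw [eq_C_leadingCoeff_mul_nodal hn hpr]
  rw [derivative_C_mul, eval_mul, eval_C,
    Lagrange.eval_nodal_derivative_eval_node_eq (mem_range.2 hi), Lagrange.eval_nodal]

end Factorization

section SignsAtRoots

variable {R : Type*} [CommRing R] [LinearOrder R] [IsStrictOrderedRing R] {p : R[X]} {n : ℕ}
  {x : ℕ → R}

theorem neg_one_pow_mul_leadingCoeff_mul_eval_zero_pos (hp : p ≠ 0) (hn : p.natDegree = n)
    (hpr : p.roots = (Multiset.range n).map x) (hpos : ∀ i < n, 0 < x i) :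
    0 < (-1) ^ n * p.leadingCoeff * eval 0 p := by
  have hprod : 0 < (-1) ^ #(range n) * ∏ j ∈ range n, (0 - x j) :=
    neg_one_pow_card_mul_prod_pos subset_rfl
      (fun j hj => by simpa using hpos j (mem_range.1 hj)) (by simp)
  rw [card_range] at hprod
  calc 0 < p.leadingCoeff * p.leadingCoeff * ((-1) ^ n * ∏ j ∈ range n, (0 - x j)) :=
        mul_pos (mul_self_pos.2 (leadingCoeff_ne_zero.2 hp)) hprod
    _ = (-1) ^ n * p.leadingCoeff * eval 0 p := by
        rw [eval_eq_leadingCoeff_mul_prod hn hpr]; ring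

theorem neg_one_pow_mul_leadingCoeff_mul_eval_derivative_pos (hp : p ≠ 0)
    (hn : p.natDegree = n) (hpr : p.roots = (Multiset.range n).map x)
    (hx : StrictMonoOn x (Set.Iio n)) {i : ℕ} (hi : i < n) :
    0 < (-1) ^ (n - i - 1) * p.leadingCoeff * eval (x i) (derivative p) := by
  have hprod : 0 < (-1) ^ #(Ioo i n) * ∏ j ∈ (range n).erase i, (x i - x j) := by
    refine neg_one_pow_card_mul_prod_pos ?_ (fun j hj => ?_) (fun j hj => ?_)
    · intro j hj
      simp only [mem_Ioo, mem_erase, mem_range] at hj ⊢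
      omega
    · simp only [mem_Ioo] at hj
      exact sub_neg.2 (hx hi hj.2 hj.1)
    · simp only [Finset.mem_sdiff, mem_erase, mem_range, mem_Ioo] at hj
      exact sub_pos.2 (hx (show j < n from hj.1.2) hi (by omega))
  rw [Nat.card_Ioo] at hprod
  calc 0 < p.leadingCoeff * p.leadingCoeff *
        ((-1) ^ (n - i - 1) * ∏ j ∈ (range n).erase i, (x i - x j)) :=
        mul_pos (mul_self_pos.2 (leadingCoeff_ne_zero.2 hp)) hprod
    _ = (-1) ^ (n - i - 1) * p.leadingCoeff * eval (x i) (derivative p) := by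
        rw [eval_derivative_eq_leadingCoeff_mul_prod hn hpr hi]; ring

end SignsAtRoots

namespace Polynomial

variable {R : Type*} [CommRing R]

noncomputable def laguerreShift (α : R) (p : R[X]) : R[X] :=
  X * derivative p + (C α - X) * p

theorem eval_laguerreShift (α t : R) (p : R[X]) :
    eval t (laguerreShift α p) = t * eval t (derivative p) + (α - t) * eval t p := by
  simp [laguerreShift]

theorem natDegree_laguerreShift_le (α : R) (p : R[X]) :
    (laguerreShift α p).natDegree ≤ p.natDegree + 1 := by
  have hXd : (X * derivative p).natDegree ≤ p.natDegree + 1 :=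
    natDegree_mul_le.trans <| by
      have := natDegree_X_le (R := R)
      have := p.natDegree_derivative_le
      omega
  have hCX : (C α - X).natDegree ≤ 1 :=
    (natDegree_sub_le _ _).trans (max_le (by simp) natDegree_X_le)
  exact natDegree_add_le_of_degree_le hXd (natDegree_mul_le.trans (by omega))

theorem coeff_laguerreShift_natDegree_succ (α : R) (p : R[X]) :
    (laguerreShift α p).coeff (p.natDegree + 1) = -p.leadingCoeff := by
  simp [laguerreShift, sub_mul, coeff_X_mul, coeff_derivative]

theorem natDegree_laguerreShift (α : R) {p : R[X]} (hp : p ≠ 0) :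
    (laguerreShift α p).natDegree = p.natDegree + 1 :=
  (natDegree_laguerreShift_le α p).antisymm <| le_natDegree_of_ne_zero <| by
    rw [coeff_laguerreShift_natDegree_succ]
    exact neg_ne_zero.2 (leadingCoeff_ne_zero.2 hp)

theorem leadingCoeff_laguerreShift (α : R) {p : R[X]} (hp : p ≠ 0) :
    (laguerreShift α p).leadingCoeff = -p.leadingCoeff := by
  rw [leadingCoeff, natDegree_laguerreShift α hp, coeff_laguerreShift_natDegree_succ]

end Polynomial

/-- For `α > 0`, if all zeros of `p` are positive and simple, then all zeros of
`Λ_α p = x p' + (α - x) p` are positive and simple, and they interlace the zeros of `p`. -/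
theorem stmt_3 (α : ℝ) (hα : 0 < α) (p : Polynomial ℝ) (hp : p ≠ 0)
    (n : ℕ) (hn : p.natDegree = n) (x : ℕ → ℝ)
    (hx : StrictMonoOn x (Set.Iio n)) (hpr : p.roots = (Multiset.range n).map x)
    (hpos : ∀ i < n, 0 < x i) :
    ∃ y : ℕ → ℝ, StrictMonoOn y (Set.Iio (n + 1)) ∧
      (Polynomial.X * Polynomial.derivative p + (Polynomial.C α - Polynomial.X) * p).roots
        = (Multiset.range (n + 1)).map y ∧
      (∀ i < n + 1, 0 < y i) ∧
      (∀ i < n, y i < x i ∧ x i < y (i + 1)) := by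
  show ∃ y : ℕ → ℝ, StrictMonoOn y (Set.Iio (n + 1)) ∧ (laguerreShift α p).roots = _ ∧ _
  set c := p.leadingCoeff
  have hdeg := natDegree_laguerreShift α hp
  obtain ⟨M, hM0, hMx, hMq⟩ : ∃ M : ℝ, 0 < M ∧ (∀ i < n, x i < M) ∧
      0 < -c * eval M (laguerreShift α p) := by
    have hbig := (eventually_all_finset (range n)).2 fun i _ => eventually_gt_atTop (x i)
    have hsign := eventually_atTop_leadingCoeff_mul_eval_pos
      (natDegree_pos_iff_degree_pos.1 (by omega : 0 < (laguerreShift α p).natDegree))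
    obtain ⟨M, hM0, hMx, hMq⟩ := ((eventually_gt_atTop 0).and (hbig.and hsign)).exists
    exact ⟨M, hM0, fun i hi => hMx i (mem_range.2 hi), leadingCoeff_laguerreShift α hp ▸ hMq⟩
  have hf0 : 0 < (-1) ^ (n + 1) * -c * eval 0 (laguerreShift α p) :=
    calc 0 < α * ((-1) ^ n * c * eval 0 p) :=
          mul_pos hα (neg_one_pow_mul_leadingCoeff_mul_eval_zero_pos hp hn hpr hpos)
      _ = _ := by rw [eval_laguerreShift]; ring
  have hfx : ∀ i < n, 0 < (-1) ^ (n - i) * -c * eval (x i) (laguerreShift α p) := by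
    intro i hi
    have hroot : p.IsRoot (x i) :=
      (mem_roots hp).1 (hpr ▸ Multiset.mem_map_of_mem x (Multiset.mem_range.2 hi))
    calc 0 < x i * ((-1) ^ (n - i - 1) * c * eval (x i) (derivative p)) :=
          mul_pos (hpos i hi)
            (neg_one_pow_mul_leadingCoeff_mul_eval_derivative_pos hp hn hpr hx hi)
      _ = _ := by
          rw [eval_laguerreShift, hroot.eq_zero, show n - i = n - i - 1 + 1 by omega, pow_succ]
          simp only [Nat.add_sub_cancel]
          ring
  obtain ⟨y, hy_mono, hy_zero, hy_inter⟩ :=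
    exists_interlacing_zeros (laguerreShift α p).continuous hx hM0 hpos hMx hf0 hfx hMq
  refine ⟨y, hy_mono, ?_, fun i hi => (hy_zero i hi).1, hy_inter⟩
  exact roots_eq_map_range_of_injOn (ne_zero_of_natDegree_gt (n := 0) (by omega))
    (hn ▸ hdeg.le) hy_mono.injOn fun i hi => (hy_zero i hi).2
end

section
/- Let φ and ψ be sequences of real numbers, r a real number, and m a positive integer with r + φ_i > 0 and ψ_i < 1 for 1 ≤ i ≤ m. Define polynomials by B_0 = 1 and B_{n+1}(x) = x B_n'(x) + (r + φ_{n+1} + (−1 + ψ_{n+1})x) B_n(x). Then for every n ≤ m the polynomial B_n has only positive and simple zeros, and the zeros of B_n strictly interlace the zeros of B_{n−1}. -/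
open Polynomial Finset

private lemma neg_prod_pos (s : Finset ℕ) (f : ℕ → ℝ) (h : ∀ j ∈ s, f j < 0) :
    0 < (-1 : ℝ) ^ s.card * ∏ j ∈ s, f j := by
  have h1 : ∏ j ∈ s, (-(f j)) = (-1 : ℝ) ^ s.card * ∏ j ∈ s, f j := by
    rw [← Finset.prod_const, ← Finset.prod_mul_distrib]
    exact Finset.prod_congr rfl (fun j _ => by ring)
  rw [← h1]
  exact Finset.prod_pos fun j hj => neg_pos.2 (h j hj)

private lemma neg_one_pow_mul_self (n : ℕ) : ((-1 : ℝ)) ^ n * (-1) ^ n = 1 := by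
  rw [← pow_add]
  have : n + n = 2 * n := by ring
  rw [this, pow_mul]; norm_num

private lemma exists_root_between (p : Polynomial ℝ) {a b : ℝ} (hab : a < b)
    (h : eval a p * eval b p < 0) : ∃ z, a < z ∧ z < b ∧ eval z p = 0 := by
  have hc : ContinuousOn (fun t => eval t p) (Set.Icc a b) := p.continuous.continuousOn
  rcases lt_or_ge (eval a p) 0 with h1 | h1
  · have h2 : 0 < eval b p := by nlinarith
    obtain ⟨z, hz, hz0⟩ := intermediate_value_Ioo hab.le hc (Set.mem_Ioo.2 ⟨h1, h2⟩)
    exact ⟨z, hz.1, hz.2, hz0⟩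
  · have h1' : 0 < eval a p := h1.lt_of_ne (fun he => by rw [← he] at h; simp at h)
    have h2 : eval b p < 0 := by nlinarith
    obtain ⟨z, hz, hz0⟩ := intermediate_value_Ioo' hab.le hc (Set.mem_Ioo.2 ⟨h2, h1'⟩)
    exact ⟨z, hz.1, hz.2, hz0⟩

private lemma sign_shuffle (u v w xk L P1 P2 : ℝ) (hv : v * v = 1) (hw : w * w = 1) :
    u * (xk * (L * (P1 * P2))) = (u * (v * w)) * (xk * ((v * L) * (P1 * (w * P2)))) := by
  calc u * (xk * (L * (P1 * P2))) = (v * v) * ((w * w) * (u * (xk * (L * (P1 * P2))))) := by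
        rw [hv, hw]; ring
    _ = (u * (v * w)) * (xk * ((v * L) * (P1 * (w * P2)))) := by ring

/-- Zeros of the generalized Bell-type polynomials defined by `B_0 = 1` and
`B_{n+1} = x B_n' + (r + φ_{n+1} + (ψ_{n+1} - 1) x) B_n`: if `r + φ_i > 0` and
`ψ_i < 1` for `1 ≤ i ≤ m`, then for `n ≤ m` the polynomial `B_n` has only positive
and simple zeros, and the zeros of `B_n` strictly interlace the zeros of `B_{n-1}`. -/
theorem stmt_10 (r : ℝ) (φ ψ : ℕ → ℝ) (m : ℕ) (hm : 1 ≤ m)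
    (hφ : ∀ i, 1 ≤ i → i ≤ m → 0 < r + φ i)
    (hψ : ∀ i, 1 ≤ i → i ≤ m → ψ i < 1)
    (B : ℕ → Polynomial ℝ) (hB0 : B 0 = 1)
    (hBrec : ∀ n, B (n + 1) = Polynomial.X * Polynomial.derivative (B n)
        + (Polynomial.C (r + φ (n + 1)) + Polynomial.C (ψ (n + 1) - 1) * Polynomial.X) * B n) :
    ∀ n, n ≤ m →
      ∃ x : ℕ → ℝ, StrictMonoOn x (Set.Iio n) ∧
        (B n).roots = (Multiset.range n).map x ∧ (∀ i < n, 0 < x i) ∧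
        (1 ≤ n → ∃ y : ℕ → ℝ, StrictMonoOn y (Set.Iio (n - 1)) ∧
          (B (n - 1)).roots = (Multiset.range (n - 1)).map y ∧
          ∀ i, i + 1 < n → x i < y i ∧ y i < x (i + 1)) := by
  have a_pos : ∀ n, n + 1 ≤ m → 0 < r + φ (n + 1) := fun n h => hφ (n + 1) (by omega) h
  have b_neg : ∀ j, j + 1 ≤ m → ψ (j + 1) - 1 < 0 := fun j h => by
    have := hψ (j + 1) (by omega) h; linarith
  -- degrees and leading coefficients
  have hdeg : ∀ n, n ≤ m →
      (B n).natDegree = n ∧ (B n).coeff n = ∏ j ∈ Finset.range n, (ψ (j + 1) - 1) := by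
    intro n
    induction n with
    | zero => intro _; simp [hB0]
    | succ n ih =>
      intro hn
      obtain ⟨hd, hc⟩ := ih (by omega)
      have hprodne : (∏ j ∈ Finset.range (n + 1), (ψ (j + 1) - 1)) ≠ 0 :=
        Finset.prod_ne_zero_iff.2 fun j hj =>
          ne_of_lt (b_neg j (by simp only [Finset.mem_range] at hj; omega))
      have hcz : (B n).coeff (n + 1) = 0 :=
        coeff_eq_zero_of_natDegree_lt (by omega)
      have hsplit : (C (r + φ (n + 1)) + C (ψ (n + 1) - 1) * X) * B n
          = C (r + φ (n + 1)) * B n + C (ψ (n + 1) - 1) * (X * B n) := by ring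
      have hcoeff : (B (n + 1)).coeff (n + 1)
          = ∏ j ∈ Finset.range (n + 1), (ψ (j + 1) - 1) := by
        rw [hBrec, hsplit, coeff_add, coeff_add, coeff_X_mul, coeff_derivative, hcz,
          coeff_C_mul, hcz, coeff_C_mul, coeff_X_mul, hc, Finset.prod_range_succ]
        ring
      have hle : (B (n + 1)).natDegree ≤ n + 1 := by
        rw [hBrec]
        refine le_trans (natDegree_add_le _ _) (max_le ?_ ?_)
        · refine le_trans (natDegree_mul_le) ?_
          have h1 := natDegree_derivative_le (B n)
          simp only [natDegree_X]
          omega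
        · refine le_trans (natDegree_mul_le) ?_
          have h2 : (C (r + φ (n + 1)) + C (ψ (n + 1) - 1) * X).natDegree ≤ 1 := by
            refine le_trans (natDegree_add_le _ _) (max_le ?_ ?_)
            · exact le_trans (le_of_eq (natDegree_C _)) (by omega)
            · exact le_trans natDegree_mul_le (by rw [natDegree_C, natDegree_X])
          omega
      refine ⟨le_antisymm hle (le_natDegree_of_ne_zero ?_), hcoeff⟩
      rw [hcoeff]; exact hprodne
  -- positivity at 0
  have heval0 : ∀ n, n ≤ m → 0 < eval 0 (B n) := by
    intro n
    induction n with
    | zero => intro _; simp [hB0]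
    | succ n ih =>
      intro hn
      rw [hBrec]
      simp only [eval_add, eval_mul, eval_X, eval_C, zero_mul, zero_add, mul_zero, add_zero]
      exact mul_pos (a_pos n hn) (ih (by omega))
  intro n
  induction n with
  | zero =>
    intro _
    refine ⟨fun _ => 0, fun a ha => absurd ha (by simp), by simp [hB0], by omega, by omega⟩
  | succ n ih =>
    intro hn1
    obtain ⟨x, hxmono, hxroots, hxpos, -⟩ := ih (by omega)
    obtain ⟨hdn, hcn⟩ := hdeg n (by omega)
    obtain ⟨hdn1, hcn1⟩ := hdeg (n + 1) hn1
    set L : ℝ := ∏ j ∈ Finset.range n, (ψ (j + 1) - 1) with hL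
    set L1 : ℝ := ∏ j ∈ Finset.range (n + 1), (ψ (j + 1) - 1) with hL1
    have hLpos : 0 < (-1 : ℝ) ^ n * L := by
      have h := neg_prod_pos (Finset.range n) (fun j => ψ (j + 1) - 1)
        (fun j hj => b_neg j (by simp only [Finset.mem_range] at hj; omega))
      simp only [Finset.card_range] at h
      rw [← hL] at h
      exact h
    have hL1pos : 0 < (-1 : ℝ) ^ (n + 1) * L1 := by
      have h := neg_prod_pos (Finset.range (n + 1)) (fun j => ψ (j + 1) - 1)
        (fun j hj => b_neg j (by simp only [Finset.mem_range] at hj; omega))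
      simp only [Finset.card_range] at h
      rw [← hL1] at h
      exact h
    have hLne : L ≠ 0 := by
      intro h; rw [h, mul_zero] at hLpos; exact lt_irrefl _ hLpos
    have hL1ne : L1 ≠ 0 := by
      intro h; rw [h, mul_zero] at hL1pos; exact lt_irrefl _ hL1pos
    have hBne : B n ≠ 0 := fun h => hLne (hcn.symm.trans (by rw [h, coeff_zero]))
    have hBn1ne : B (n + 1) ≠ 0 := fun h => hL1ne (hcn1.symm.trans (by rw [h, coeff_zero]))
    -- product form of B n
    have hlcn : (B n).leadingCoeff = L := by
      show (B n).coeff (B n).natDegree = L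
      rw [hdn]; exact hcn
    have hcard : (B n).roots.card = (B n).natDegree := by
      rw [hxroots, hdn, Multiset.card_map, Multiset.card_range]
    have hprod : B n = C L * ∏ j ∈ Finset.range n, (X - C (x j)) := by
      have h1 := (C_leadingCoeff_mul_prod_multiset_X_sub_C hcard).symm
      rw [hlcn, hxroots, Multiset.map_map] at h1
      exact h1
    have hroot : ∀ k < n, eval (x k) (B n) = 0 := by
      intro k hk
      have : x k ∈ (B n).roots := by
        rw [hxroots]; exact Multiset.mem_map.2 ⟨k, Multiset.mem_range.2 hk, rfl⟩
      exact isRoot_of_mem_roots this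
    -- sign of B (n+1) at the roots of B n
    have hsign_x : ∀ k < n, 0 < (-1 : ℝ) ^ (k + 1) * eval (x k) (B (n + 1)) := by
      intro k hk
      have hkmem : k ∈ Finset.range n := Finset.mem_range.2 hk
      have hBn' : B n = (X - C (x k)) * (C L * ∏ j ∈ (Finset.range n).erase k, (X - C (x j))) := by
        rw [hprod, ← Finset.mul_prod_erase _ _ hkmem]; ring
      have hd : eval (x k) (derivative (B n))
          = L * ∏ j ∈ (Finset.range n).erase k, (x k - x j) := by
        rw [hBn', derivative_mul]
        simp [eval_prod]
      have heval : eval (x k) (B (n + 1))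
          = x k * (L * ∏ j ∈ (Finset.range n).erase k, (x k - x j)) := by
        rw [hBrec]
        simp [hroot k hk, hd]
      set P1 : ℝ := ∏ j ∈ Finset.range k, (x k - x j) with hP1def
      set P2 : ℝ := ∏ j ∈ Finset.Ico (k + 1) n, (x k - x j) with hP2def
      have herase : (Finset.range n).erase k = Finset.range k ∪ Finset.Ico (k + 1) n := by
        ext j
        simp only [Finset.mem_erase, Finset.mem_range, Finset.mem_union, Finset.mem_Ico]
        omega
      have hdisj : Disjoint (Finset.range k) (Finset.Ico (k + 1) n) := by
        simp only [Finset.disjoint_left, Finset.mem_range, Finset.mem_Ico]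
        intro j hj; omega
      have hPsplit : ∏ j ∈ (Finset.range n).erase k, (x k - x j) = P1 * P2 := by
        rw [herase, Finset.prod_union hdisj]
      have hP1 : 0 < P1 :=
        Finset.prod_pos fun j hj => by
          have hj' := Finset.mem_range.1 hj
          have := hxmono (Set.mem_Iio.2 (by omega : j < n)) (Set.mem_Iio.2 hk) hj'
          linarith
      have hP2 : 0 < (-1 : ℝ) ^ (n - 1 - k) * P2 := by
        have hcard2 : (Finset.Ico (k + 1) n).card = n - 1 - k := by
          rw [Nat.card_Ico]; omega
        have := neg_prod_pos (Finset.Ico (k + 1) n) (fun j => x k - x j)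
          (fun j hj => by
            have hj' := Finset.mem_Ico.1 hj
            have := hxmono (Set.mem_Iio.2 hk) (Set.mem_Iio.2 hj'.2) (by omega)
            show x k - x j < 0
            linarith)
        rw [hcard2] at this
        exact this
      have hpow : (-1 : ℝ) ^ (k + 1) * ((-1) ^ n * (-1) ^ (n - 1 - k)) = 1 := by
        rw [← pow_add, ← pow_add]
        have he : (k + 1) + (n + (n - 1 - k)) = 2 * n := by omega
        rw [he, pow_mul]; norm_num
      have key : (-1 : ℝ) ^ (k + 1) * (x k * (L * (P1 * P2)))
          = ((-1) ^ (k + 1) * ((-1) ^ n * (-1) ^ (n - 1 - k)))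
            * (x k * (((-1) ^ n * L) * (P1 * ((-1) ^ (n - 1 - k) * P2)))) :=
        sign_shuffle _ _ _ _ _ _ _ (neg_one_pow_mul_self n) (neg_one_pow_mul_self (n - 1 - k))
      rw [heval, hPsplit, key, hpow, one_mul]
      exact mul_pos (hxpos k hk) (mul_pos hLpos (mul_pos hP1 hP2))
    -- pick a large point M
    have hlcn1 : (B (n + 1)).leadingCoeff = L1 := by
      show (B (n + 1)).coeff (B (n + 1)).natDegree = L1
      rw [hdn1]; exact hcn1
    have hq : Filter.Tendsto (fun t => eval t (C ((-1 : ℝ) ^ (n + 1)) * B (n + 1)))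
        Filter.atTop Filter.atTop := by
      apply tendsto_atTop_of_leadingCoeff_nonneg
      · rw [degree_C_mul (by positivity : ((-1 : ℝ) ^ (n + 1)) ≠ 0)]
        rw [degree_eq_natDegree hBn1ne, hdn1]
        exact_mod_cast Nat.succ_pos n
      · rw [leadingCoeff_mul, leadingCoeff_C, hlcn1]
        exact le_of_lt hL1pos
    have hev : ∀ᶠ M in Filter.atTop,
        0 < eval M (C ((-1 : ℝ) ^ (n + 1)) * B (n + 1)) ∧ max 0 (x (n - 1)) < M :=
      (hq.eventually_gt_atTop 0).and (Filter.eventually_gt_atTop _)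
    obtain ⟨M, hM1, hM2⟩ := hev.exists
    have hMpos : 0 < M := lt_of_le_of_lt (le_max_left _ _) hM2
    have hMx : ∀ k < n, x k < M := by
      intro k hk
      have hxle : x k ≤ x (n - 1) := by
        rcases eq_or_lt_of_le (by omega : k ≤ n - 1) with h | h
        · rw [h]
        · exact le_of_lt (hxmono (Set.mem_Iio.2 hk) (Set.mem_Iio.2 (by omega)) h)
      exact lt_of_le_of_lt hxle (lt_of_le_of_lt (le_max_right _ _) hM2)
    -- the comparison points
    set t : ℕ → ℝ := fun i => if i = 0 then 0 else if i ≤ n then x (i - 1) else M with htdef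
    have ht0 : t 0 = 0 := by simp [htdef]
    have htmid : ∀ i, 1 ≤ i → i ≤ n → t i = x (i - 1) := by
      intro i h1 h2; simp only [htdef]; rw [if_neg (by omega), if_pos h2]
    have httop : t (n + 1) = M := by
      simp only [htdef]; rw [if_neg (by omega), if_neg (by omega)]
    have ht : ∀ i j, i < j → j ≤ n + 1 → t i < t j := by
      intro i j hij hj
      by_cases hi0 : i = 0
      · subst hi0
        rw [ht0]
        by_cases hjn : j ≤ n
        · rw [htmid j (by omega) hjn]; exact hxpos (j - 1) (by omega)
        · have : j = n + 1 := by omega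
          rw [this, httop]; exact hMpos
      · have hin : i ≤ n := by omega
        rw [htmid i (by omega) hin]
        by_cases hjn : j ≤ n
        · rw [htmid j (by omega) hjn]
          exact hxmono (Set.mem_Iio.2 (by omega)) (Set.mem_Iio.2 (by omega)) (by omega)
        · have : j = n + 1 := by omega
          rw [this, httop]
          exact hMx (i - 1) (by omega)
    have hsign : ∀ i ≤ n + 1, 0 < (-1 : ℝ) ^ i * eval (t i) (B (n + 1)) := by
      intro i hi
      rcases Nat.eq_zero_or_pos i with hi0 | hipos
      · subst hi0
        rw [ht0, pow_zero, one_mul]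
        exact heval0 (n + 1) hn1
      · by_cases hin : i ≤ n
        · obtain ⟨k, rfl⟩ : ∃ k, i = k + 1 := ⟨i - 1, by omega⟩
          rw [htmid (k + 1) (by omega) hin]
          simpa using hsign_x k (by omega)
        · have : i = n + 1 := by omega
          subst this
          rw [httop]
          simpa [eval_mul] using hM1
    -- choose the roots
    have hzex : ∀ i, ∃ z, i ≤ n → t i < z ∧ z < t (i + 1) ∧ eval z (B (n + 1)) = 0 := by
      intro i
      by_cases hi : i ≤ n
      · have h1 := hsign i (by omega)
        have h2 := hsign (i + 1) (by omega)
        have hlt : t i < t (i + 1) := ht i (i + 1) (by omega) (by omega)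
        have hneg : eval (t i) (B (n + 1)) * eval (t (i + 1)) (B (n + 1)) < 0 := by
          have hp := mul_pos h1 h2
          have he : ((-1 : ℝ) ^ i * eval (t i) (B (n + 1)))
              * ((-1) ^ (i + 1) * eval (t (i + 1)) (B (n + 1)))
              = ((-1 : ℝ) ^ i * (-1) ^ (i + 1))
                * (eval (t i) (B (n + 1)) * eval (t (i + 1)) (B (n + 1))) := by ring
          have hpw : ((-1 : ℝ)) ^ i * (-1) ^ (i + 1) = -1 := by
            rw [← pow_add]
            exact Odd.neg_one_pow ⟨i, by omega⟩
          rw [he, hpw] at hp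
          linarith
        obtain ⟨z, hz1, hz2, hz3⟩ := exists_root_between (B (n + 1)) hlt hneg
        exact ⟨z, fun _ => ⟨hz1, hz2, hz3⟩⟩
      · exact ⟨0, fun h => absurd h hi⟩
    choose z hz using hzex
    have hzpos : ∀ i ≤ n, 0 < z i := by
      intro i hi
      rcases Nat.eq_zero_or_pos i with hi0 | hipos
      · subst hi0; rw [← ht0]; exact (hz 0 hi).1
      · have : (0 : ℝ) < t i := by rw [← ht0]; exact ht 0 i (by omega) (by omega)
        exact lt_trans this (hz i hi).1
    have hzmono : ∀ i j, i < j → j ≤ n → z i < z j := by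
      intro i j hij hj
      have h1 : z i < t (i + 1) := (hz i (by omega)).2.1
      have h2 : t j < z j := (hz j hj).1
      rcases eq_or_lt_of_le (by omega : i + 1 ≤ j) with h | h
      · rw [h] at h1; linarith
      · have := ht (i + 1) j h (by omega); linarith
    have hzroots : (B (n + 1)).roots = (Multiset.range (n + 1)).map z := by
      have hnodup : ((Multiset.range (n + 1)).map z).Nodup := by
        refine Multiset.Nodup.map_on ?_ (Multiset.nodup_range _)
        intro a ha b hb hab
        rw [Multiset.mem_range] at ha hb
        by_contra hne
        rcases Nat.lt_or_ge a b with h | h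
        · exact absurd hab (ne_of_lt (hzmono a b h (by omega)))
        · have : b < a := by omega
          exact absurd hab.symm (ne_of_lt (hzmono b a this (by omega)))
      have hsub : (Multiset.range (n + 1)).map z ≤ (B (n + 1)).roots := by
        rw [Multiset.le_iff_subset hnodup]
        intro a ha
        obtain ⟨i, hi, rfl⟩ := Multiset.mem_map.1 ha
        rw [Multiset.mem_range] at hi
        exact (mem_roots hBn1ne).2 (hz i (by omega)).2.2
      have hcards : (B (n + 1)).roots.card ≤ n + 1 := by
        have := (B (n + 1)).card_roots'
        omega
      refine (Multiset.eq_of_le_of_card_le hsub ?_).symm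
      rw [Multiset.card_map, Multiset.card_range]
      exact hcards
    refine ⟨z, ?_, hzroots, ?_, fun _ => ⟨x, ?_, ?_, ?_⟩⟩
    · intro a ha b hb hab
      exact hzmono a b hab (Nat.lt_succ_iff.1 (Set.mem_Iio.1 hb))
    · intro i hi
      exact hzpos i (by omega)
    · simpa using hxmono
    · simpa using hxroots
    · intro i hi
      have hi' : i + 1 ≤ n := by omega
      have h1 : z i < t (i + 1) := (hz i (by omega)).2.1
      have h2 : t (i + 1) < z (i + 1) := (hz (i + 1) hi').1
      rw [htmid (i + 1) (by omega) hi'] at h1 h2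
      simp only [Nat.add_sub_cancel] at h1 h2
      exact ⟨h1, h2⟩
end

section
/- Let α > −1 and K ≥ 1. Setting φ_i = i−1 for i ≥ 1, the generalized Bell polynomial with parameters r = α+1, φ, ψ = 0 satisfies ℬ_n^{α+1;φ,0}(x) = (−1)^n L̂_n^α(x), where L̂_n^α is the monic Laguerre polynomial. -/
open Polynomial Finset

/-- The standard (generalized) Laguerre polynomial `L_n^α`. -/
noncomputable def laguerre (α : ℝ) (n : ℕ) : Polynomial ℝ :=
  ∑ k ∈ Finset.range (n + 1),
    Polynomial.C ((-1 : ℝ) ^ k * (ascPochhammer ℝ (n - k)).eval (α + k + 1) /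
      ((n - k).factorial * k.factorial)) * Polynomial.X ^ k

/-- The monic Laguerre polynomial `L̂_n^α = (-1)^n n! L_n^α`. -/
noncomputable def monicLaguerre (α : ℝ) (n : ℕ) : Polynomial ℝ :=
  Polynomial.C ((-1 : ℝ) ^ n * n.factorial) * laguerre α n

/-- The Laguerre polynomial normalized to take the value 1 at 0:
`𝔏_n^α = (n!/(1+α)_n) L_n^α`. -/
noncomputable def laguerreOne (α : ℝ) (n : ℕ) : Polynomial ℝ :=
  Polynomial.C ((n.factorial : ℝ) / (ascPochhammer ℝ n).eval (1 + α)) * laguerre α n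

/-- The Brenke normalization `ℓ_n^α = L_n^α/(1+α)_n`. -/
noncomputable def laguerreBrenke (α : ℝ) (n : ℕ) : Polynomial ℝ :=
  Polynomial.C (1 / (ascPochhammer ℝ n).eval (1 + α)) * laguerre α n

/-! Both sides satisfy `B 0 = 1` and the same first-order recurrence, so it suffices that
`(-1)^n L̂_n^α` does. Comparing coefficients of `X^(k+1)`, this reduces to an identity between
`(-1)^k C(n,k) (α+k+1)_{n-k}`, the coefficients of `(-1)^n L̂_n^α`, which follows from Pascal's rule,
`C(n,k+1)(k+1) = C(n,k)(n-k)` and `(x+1)_{m+1} - (x)_{m+1} = (m+1)(x+1)_m`. -/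

section BellStep

variable {R : Type*} [CommRing R]

/-- One step `ℬ_n ↦ ℬ_{n+1}` of the Bell recurrence, with `a = r + φ_{n+1}`. -/
noncomputable def bellStep (a : R) (p : R[X]) : R[X] :=
  X * derivative p + (C a - X) * p

lemma coeff_bellStep_zero (a : R) (p : R[X]) : (bellStep a p).coeff 0 = a * p.coeff 0 := by
  simp [bellStep, sub_mul, mul_coeff_zero]

lemma coeff_bellStep_succ (a : R) (p : R[X]) (k : ℕ) :
    (bellStep a p).coeff (k + 1) = (k + 1 + a) * p.coeff (k + 1) - p.coeff k := by
  simp only [bellStep, coeff_add, sub_mul, coeff_sub, coeff_C_mul, coeff_X_mul,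
    coeff_derivative]
  ring

end BellStep

lemma ascPochhammer_succ_eval_add_one_sub (R : Type*) [CommRing R] (m : ℕ) (x : R) :
    (ascPochhammer R (m + 1)).eval (x + 1) - (ascPochhammer R (m + 1)).eval x =
      (m + 1) * (ascPochhammer R m).eval (x + 1) := by
  have := congr_arg (eval x) (ascPochhammer_succ_comp_X_add_one R m)
  simp only [eval_comp, eval_add, eval_X, eval_one, nsmul_eq_mul, eval_mul, eval_natCast] at this
  rw [this]
  push_cast
  ring

section SignedLaguerreCoeff

variable {R : Type*} [CommRing R]

/-- The truncated `n - k` is harmless: for `k > n` the binomial coefficient vanishes. -/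
noncomputable def signedLaguerreCoeff (α : R) (n k : ℕ) : R :=
  (-1) ^ k * n.choose k * (ascPochhammer R (n - k)).eval (α + k + 1)

lemma signedLaguerreCoeff_succ_zero (α : R) (n : ℕ) :
    signedLaguerreCoeff α (n + 1) 0 = (α + 1 + n) * signedLaguerreCoeff α n 0 := by
  simp only [signedLaguerreCoeff, Nat.sub_zero, ascPochhammer_succ_eval, pow_zero,
    Nat.choose_zero_right, Nat.cast_one, Nat.cast_zero, add_zero, one_mul, mul_one]
  ring

lemma signedLaguerreCoeff_succ_succ (α : R) (n k : ℕ) :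
    signedLaguerreCoeff α (n + 1) (k + 1) =
      (k + 1 + (α + 1 + n)) * signedLaguerreCoeff α n (k + 1) - signedLaguerreCoeff α n k := by
  rcases lt_or_ge k n with hkn | hnk
  · obtain ⟨m, rfl⟩ : ∃ m, n = k + 1 + m := ⟨n - (k + 1), by omega⟩
    have hchoose : ((k + 1 + m).choose (k + 1) * (k + 1) : R) =
        (k + 1 + m).choose k * (m + 1) := by
      have := Nat.choose_succ_right_eq (k + 1 + m) k
      rw [show k + 1 + m - k = m + 1 by omega] at this
      exact_mod_cast congrArg (Nat.cast : ℕ → R) this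
    have hpoch := ascPochhammer_succ_eval_add_one_sub R m (α + k + 1)
    have hsucc := ascPochhammer_succ_eval m (α + k + 1 + 1)
    simp only [signedLaguerreCoeff, Nat.choose_succ_succ', Nat.cast_add, Nat.cast_one,
      show k + 1 + m + 1 - (k + 1) = m + 1 by omega, show k + 1 + m - (k + 1) = m by omega,
      show k + 1 + m - k = m + 1 by omega, ← add_assoc]
    linear_combination (-(-1) ^ k * ((k + 1 + m).choose k : R)) * hpoch
      - (-1) ^ k * ((k + 1 + m).choose (k + 1) : R) * hsucc
      + (-1) ^ k * (ascPochhammer R m).eval (α + k + 1 + 1) * hchoose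
  · rcases hnk.eq_or_lt with rfl | hlt
    · simp [signedLaguerreCoeff, pow_succ]
    · simp [signedLaguerreCoeff, Nat.choose_eq_zero_of_lt, hlt, hlt.trans (Nat.lt_succ_self k)]

end SignedLaguerreCoeff

lemma coeff_signed_monicLaguerre (α : ℝ) (n k : ℕ) :
    (C ((-1 : ℝ) ^ n) * monicLaguerre α n).coeff k = signedLaguerreCoeff α n k := by
  rw [monicLaguerre, ← mul_assoc, ← C_mul, coeff_C_mul, laguerre, finsetSum_coeff]
  simp only [coeff_C_mul_X_pow, Finset.sum_ite_eq, Finset.mem_range, signedLaguerreCoeff]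
  rw [← mul_assoc, ← pow_add, ← two_mul, pow_mul, neg_one_sq, one_pow, one_mul]
  split_ifs with hk
  · rw [Nat.cast_choose ℝ (Nat.lt_succ_iff.mp hk)]
    ring
  · rw [Nat.choose_eq_zero_of_lt (by omega)]
    simp

lemma signed_monicLaguerre_succ (α : ℝ) (n : ℕ) :
    C ((-1 : ℝ) ^ (n + 1)) * monicLaguerre α (n + 1) =
      bellStep (α + 1 + n) (C ((-1 : ℝ) ^ n) * monicLaguerre α n) := by
  ext (_ | k)
  · rw [coeff_bellStep_zero, coeff_signed_monicLaguerre, coeff_signed_monicLaguerre,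
      signedLaguerreCoeff_succ_zero]
  · rw [coeff_bellStep_succ]
    simp only [coeff_signed_monicLaguerre, signedLaguerreCoeff_succ_succ]

theorem stmt_11_general (α : ℝ)
    (B : ℕ → Polynomial ℝ) (hB0 : B 0 = 1)
    (hBrec : ∀ n : ℕ, B (n + 1) = Polynomial.X * Polynomial.derivative (B n)
        + (Polynomial.C (α + 1 + (n : ℝ)) - Polynomial.X) * B n) :
    ∀ n, B n = Polynomial.C ((-1 : ℝ) ^ n) * monicLaguerre α n := by
  intro n
  induction n with
  | zero => simp [hB0, monicLaguerre, laguerre]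
  | succ n ih => rw [hBrec n, ih, signed_monicLaguerre_succ, bellStep]

/-- With `φ_i = i - 1`, the generalized Bell polynomials with parameters
`r = α + 1`, `φ`, `ψ = 0` are the (sign-adjusted) monic Laguerre polynomials:
`ℬ_n^{α+1;φ,0} = (-1)^n L̂_n^α`. -/
theorem stmt_11 (α : ℝ) (hα : -1 < α)
    (B : ℕ → Polynomial ℝ) (hB0 : B 0 = 1)
    (hBrec : ∀ n : ℕ, B (n + 1) = Polynomial.X * Polynomial.derivative (B n)
        + (Polynomial.C (α + 1 + (n : ℝ)) - Polynomial.X) * B n) :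
    ∀ n, B n = Polynomial.C ((-1 : ℝ) ^ n) * monicLaguerre α n :=
  stmt_11_general α B hB0 hBrec
end

section
/- Let α > 0 and let p be a real polynomial. If c < d are two consecutive elements of Z(p) ∪ {0}, where Z(p) is the set of real zeros of p, then Υ_α p(x) = p(x) + (x/α)p'(x) has some zero in the open interval (c,d). -/
/-!
Rolle's theorem applied to `|x|^α p(x)`, which vanishes at both ends of `[c, d]` (at `0` because
`α > 0`). On an interval avoiding `0` in its interior its derivative is `|x|^(α-1)` times
`±(α p + x p')`, so its critical point is a zero of `Υ_α p`. The case `d ≤ 0` reduces to `0 ≤ c`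
through `x ↦ -x`, which commutes with `Υ_α`.
-/

open Polynomial Set

theorem exists_mul_add_mul_deriv_eq_zero_of_nonneg {f : ℝ → ℝ} (hf : Differentiable ℝ f)
    {α c d : ℝ} (hα : 0 < α) (h0 : 0 ≤ c) (hcd : c < d) (hc : f c = 0 ∨ c = 0) (hd : f d = 0) :
    ∃ t ∈ Ioo c d, α * f t + t * deriv f t = 0 := by
  set g : ℝ → ℝ := fun x => x ^ α * f x
  have hgc : g c = 0 := by
    rcases hc with hc | rfl
    · simp [g, hc]
    · simp [g, Real.zero_rpow hα.ne']
  have hgd : g d = 0 := by simp [g, hd]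
  have hcont : ContinuousOn g (Icc c d) :=
    ((Real.continuous_rpow_const hα.le).mul hf.continuous).continuousOn
  have hderiv : ∀ x ∈ Ioo c d,
      HasDerivAt g (α * x ^ (α - 1) * f x + x ^ α * deriv f x) x := fun x hx =>
    (Real.hasDerivAt_rpow_const (Or.inl (h0.trans_lt hx.1).ne')).mul (hf x).hasDerivAt
  obtain ⟨t, ht, hgt⟩ := exists_hasDerivAt_eq_zero hcd hcont (hgc.trans hgd.symm) hderiv
  have htpos : 0 < t := h0.trans_lt ht.1
  refine ⟨t, ht, ?_⟩
  have hfactor : α * t ^ (α - 1) * f t + t ^ α * deriv f t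
      = t ^ (α - 1) * (α * f t + t * deriv f t) := by
    rw [show t ^ α = t ^ (α - 1) * t by rw [← Real.rpow_add_one htpos.ne', sub_add_cancel]]
    ring
  rw [hfactor] at hgt
  exact (mul_eq_zero.mp hgt).resolve_left (Real.rpow_pos_of_pos htpos _).ne'

theorem exists_mul_add_mul_deriv_eq_zero {f : ℝ → ℝ} (hf : Differentiable ℝ f)
    {α c d : ℝ} (hα : 0 < α) (hcd : c < d) (hc : f c = 0 ∨ c = 0) (hd : f d = 0 ∨ d = 0)
    (h0 : (0 : ℝ) ∉ Ioo c d) : ∃ t ∈ Ioo c d, α * f t + t * deriv f t = 0 := by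
  rcases le_or_gt 0 c with hc0 | hc0
  · have hd : f d = 0 := hd.resolve_right (hc0.trans_lt hcd).ne'
    exact exists_mul_add_mul_deriv_eq_zero_of_nonneg hf hα hc0 hcd hc hd
  · have hd0 : d ≤ 0 := not_lt.mp fun hd0 => h0 ⟨hc0, hd0⟩
    have hc : f c = 0 := hc.resolve_right hc0.ne
    obtain ⟨t, ht, hft⟩ := exists_mul_add_mul_deriv_eq_zero_of_nonneg (f := fun x => f (-x))
      (hf.comp differentiable_neg) hα (neg_nonneg.mpr hd0) (neg_lt_neg hcd)
      (by simpa using hd) (by simpa using hc)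
    refine ⟨-t, ⟨lt_neg.mp ht.2, neg_lt.mp ht.1⟩, ?_⟩
    rw [deriv_comp_neg] at hft
    linarith

/-- For `α > 0`, if `c < d` are two consecutive elements of `Z(p) ∪ {0}` (where `Z(p)`
is the set of real zeros of `p`), then `Υ_α p = p + (x/α) p'` has a zero in `(c, d)`. -/
theorem stmt_13 (α : ℝ) (hα : 0 < α) (p : Polynomial ℝ) (c d : ℝ) (hcd : c < d)
    (hc : p.IsRoot c ∨ c = 0) (hd : p.IsRoot d ∨ d = 0)
    (hconsec : ∀ t : ℝ, c < t → t < d → ¬ p.IsRoot t ∧ t ≠ 0) :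
    ∃ t : ℝ, c < t ∧ t < d ∧
      (p + Polynomial.C (1 / α) * (Polynomial.X * Polynomial.derivative p)).IsRoot t := by
  obtain ⟨t, ht, hroot⟩ := exists_mul_add_mul_deriv_eq_zero p.differentiable hα hcd hc hd
    fun h0 => (hconsec 0 h0.1 h0.2).2 rfl
  refine ⟨t, ht.1, ht.2, ?_⟩
  rw [Polynomial.deriv] at hroot
  simp only [IsRoot, eval_add, eval_mul, eval_C, eval_X]
  field_simp
  linarith
end

section
/- Let α > 0 and let p be a real polynomial with p(0) ≠ 0. If p and Υ_α p have the same number of real zeros (counted with multiplicity), then ϑ(Υ_α p) < ϑ(p), where ϑ(q) denotes the sum of multiplicities of all multiple real zeros of q; in particular, if ϑ(p) > 0 then Υ_α p has strictly smaller total multiplicity of multiple real zeros than p. -/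
/-!
Rolle's theorem applied to `|x| ^ α * p x`, whose derivative is a nonvanishing multiple of
`Υ_α p` away from `0`, gives a zero of `Υ_α p` strictly between each real zero `ξ` of `p` and the
next zero of `p` (or `0`) towards the origin. These zeros are pairwise distinct and are not zeros
of `p`, while every zero of `p` of multiplicity `m` remains a zero of `Υ_α p` of multiplicity at
least `m - 1`. Together this already accounts for as many zeros as `p` has, so under the hypothesis
these are all the zeros of `Υ_α p`: the new ones are simple and the multiple zeros of `Υ_α p` are
the zeros of `p` of multiplicity `m ≥ 3`, now of multiplicity `m - 1`.
-/

open Polynomial Finset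

/-- `ϑ(q)`: the total multiplicity of multiple real zeros of `q`, i.e. the sum of the
multiplicities of those real zeros whose multiplicity is larger than 1. -/
noncomputable def thetaMult (q : Polynomial ℝ) : ℕ :=
  Multiset.card (q.roots.filter (fun t => 1 < q.rootMultiplicity t))

section Roots

variable {R : Type*} [CommRing R] [IsDomain R] [DecidableEq R] {p q : R[X]}

lemma count_roots_sub_dedup (p : R[X]) (t : R) :
    (p.roots - p.roots.dedup).count t = p.rootMultiplicity t - 1 := by
  rw [Multiset.count_sub, Multiset.count_dedup, count_roots]
  split_ifs with h
  · rfl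
  · rw [← count_roots, Multiset.count_eq_zero.2 h]

lemma roots_eq_of_card_roots_le (hq : q ≠ 0) {M : Multiset R}
    (hmult : ∀ t, p.rootMultiplicity t - 1 ≤ q.rootMultiplicity t) (hM : M.Nodup)
    (hMq : ∀ t ∈ M, q.IsRoot t) (hMp : ∀ t ∈ M, t ∉ p.roots)
    (hMcard : M.card = p.roots.dedup.card) (hcard : q.roots.card ≤ p.roots.card) :
    q.roots = p.roots - p.roots.dedup + M := by
  have hdisj : Disjoint (p.roots - p.roots.dedup) M :=
    Multiset.disjoint_left.2 fun ht ht' => hMp _ ht' (Multiset.mem_of_le tsub_le_self ht)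
  refine (Multiset.eq_of_le_of_card_le ?_ ?_).symm
  · rw [Multiset.add_eq_union_iff_disjoint.2 hdisj]
    refine Multiset.union_le (Multiset.le_iff_count.2 fun t => ?_)
      ((Multiset.le_iff_subset hM).2 fun t ht => (mem_roots hq).2 (hMq t ht))
    rw [count_roots_sub_dedup, count_roots]
    exact hmult t
  · rwa [Multiset.card_add, hMcard, Multiset.card_sub (Multiset.dedup_le _),
      Nat.sub_add_cancel (Multiset.card_le_card (Multiset.dedup_le _))]

lemma rootMultiplicity_le_max_of_roots_eq {M : Multiset R}
    (h : q.roots = p.roots - p.roots.dedup + M) (hM : M.Nodup) (hMp : ∀ t ∈ M, t ∉ p.roots)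
    (t : R) : q.rootMultiplicity t ≤ max 1 (p.rootMultiplicity t - 1) := by
  rw [← count_roots, h, Multiset.count_add, count_roots_sub_dedup]
  by_cases ht : t ∈ M
  · have hp : p.rootMultiplicity t = 0 := by
      rw [← count_roots]
      exact Multiset.count_eq_zero.2 (hMp t ht)
    rw [hp, Multiset.count_eq_one_of_mem hM ht]
    omega
  · rw [Multiset.count_eq_zero.2 ht]
    omega

end Roots

lemma count_filter_roots_one_lt (q : ℝ[X]) (t : ℝ) :
    (q.roots.filter fun s => 1 < q.rootMultiplicity s).count t =
      if 1 < q.rootMultiplicity t then q.rootMultiplicity t else 0 := by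
  rw [Multiset.count_filter, count_roots]

lemma thetaMult_lt_of_rootMultiplicity_le {p q : ℝ[X]}
    (h : ∀ t, q.rootMultiplicity t ≤ max 1 (p.rootMultiplicity t - 1)) (hθ : 0 < thetaMult p) :
    thetaMult q < thetaMult p := by
  obtain ⟨t₀, ht₀⟩ := Multiset.card_pos_iff_exists_mem.1 hθ
  have ht₀ : 1 < p.rootMultiplicity t₀ := (Multiset.mem_filter.1 ht₀).2
  refine Multiset.card_lt_card (lt_of_le_of_ne (Multiset.le_iff_count.2 fun t => ?_) fun heq => ?_)
  · rw [count_filter_roots_one_lt, count_filter_roots_one_lt]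
    have := h t
    split_ifs <;> omega
  · have hcount := congrArg (Multiset.count t₀) heq
    rw [count_filter_roots_one_lt, count_filter_roots_one_lt, if_pos ht₀] at hcount
    have := h t₀
    split_ifs at hcount <;> omega

noncomputable def upsilon (α : ℝ) (p : ℝ[X]) : ℝ[X] := p + C (1 / α) * (X * derivative p)

section Upsilon

variable {α : ℝ} {p : ℝ[X]}

lemma eval_upsilon (x : ℝ) : (upsilon α p).eval x = p.eval x + x * (derivative p).eval x / α := by
  simp only [upsilon, eval_add, eval_mul, eval_C, eval_X]
  ring

lemma pow_rootMultiplicity_sub_one_dvd_upsilon (α : ℝ) (p : ℝ[X]) (t : ℝ) :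
    (X - C t) ^ (p.rootMultiplicity t - 1) ∣ upsilon α p :=
  dvd_add ((pow_dvd_pow _ (Nat.sub_le _ 1)).trans (p.pow_rootMultiplicity_dvd t))
    (((pow_sub_one_dvd_derivative_of_pow_dvd (p.pow_rootMultiplicity_dvd t)).mul_left X).mul_left _)

lemma exists_isRoot_upsilon_mem_Ioo (hα : 0 < α) {a b : ℝ} (hab : a < b) (h0 : 0 ∉ Set.Ioo a b)
    (ha : a = 0 ∨ p.IsRoot a) (hb : b = 0 ∨ p.IsRoot b) :
    ∃ c ∈ Set.Ioo a b, (upsilon α p).IsRoot c := by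
  set f : ℝ → ℝ := fun x => |x| ^ α * p.eval x
  have hf0 : ∀ x, x = 0 ∨ p.IsRoot x → f x = 0 := by
    rintro x (rfl | h)
    · simp [f, Real.zero_rpow hα.ne']
    · simp [f, h.eq_zero]
  have hcont : Continuous f :=
    (continuous_abs.rpow_const fun _ => Or.inr hα.le).mul p.continuous
  have hderiv : ∀ c ∈ Set.Ioo a b, HasDerivAt f
      (SignType.sign c * α * |c| ^ (α - 1) * (upsilon α p).eval c) c := by
    intro c hc
    have hc0 : c ≠ 0 := fun h => h0 (h ▸ hc)
    refine (((hasDerivAt_abs hc0).rpow_const (Or.inl (abs_ne_zero.2 hc0))).mul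
      (p.hasDerivAt c)).congr_deriv ?_
    have hsign : (SignType.sign c : ℝ) * |c| = c := sign_mul_abs c
    have hsq : (SignType.sign c : ℝ) ^ 2 = 1 := by
      rcases hc0.lt_or_gt with h | h <;> simp [h]
    rw [eval_upsilon, Real.rpow_sub_one (abs_ne_zero.2 hc0)]
    field_simp
    linear_combination (SignType.sign c * eval c (derivative p)) * hsign
      - (|c| * eval c (derivative p)) * hsq
  obtain ⟨c, hc, hc'⟩ := exists_hasDerivAt_eq_zero hab hcont.continuousOn
    ((hf0 a ha).trans (hf0 b hb).symm) hderiv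
  have hc0 : c ≠ 0 := fun h => h0 (h ▸ hc)
  refine ⟨c, hc, ?_⟩
  have hsign0 : (SignType.sign c : ℝ) ≠ 0 := by
    rcases hc0.lt_or_gt with h | h <;> simp [h]
  simpa [hsign0, hα.ne', (Real.rpow_pos_of_pos (abs_pos.2 hc0) _).ne'] using hc'

-- `η` determines `ξ`: it is the first zero of `p` met when moving from `η` away from `0`.
def InInnerGap (p : ℝ[X]) (ξ η : ℝ) : Prop :=
  η ∈ Set.uIoo 0 ξ ∧ ∀ s, p.IsRoot s → s ∈ Set.uIcc η ξ → s = ξ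

lemma InInnerGap.not_isRoot {ξ η : ℝ} (h : InInnerGap p ξ η) : ¬ p.IsRoot η := fun hη =>
  Set.right_notMem_uIoo (h.2 η hη Set.left_mem_uIcc ▸ h.1)

lemma InInnerGap.eq {ξ ξ' η : ℝ} (h : InInnerGap p ξ η) (h' : InInnerGap p ξ' η)
    (hξ : p.IsRoot ξ) (hξ' : p.IsRoot ξ') : ξ = ξ' := by
  obtain ⟨hη, hgap⟩ := h
  obtain ⟨hη', hgap'⟩ := h'
  have : ξ ∈ Set.uIcc η ξ' ∨ ξ' ∈ Set.uIcc η ξ := by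
    simp only [Set.uIoo, Set.mem_Ioo, Set.mem_uIcc] at hη hη' ⊢
    grind
  rcases this with h | h
  · exact hgap' ξ hξ h
  · exact (hgap ξ' hξ' h).symm

lemma exists_isRoot_upsilon_inInnerGap (hα : 0 < α) (hp : p ≠ 0) {ξ : ℝ} (hξ : p.IsRoot ξ)
    (hξ0 : ξ ≠ 0) : ∃ η, (upsilon α p).IsRoot η ∧ InInnerGap p ξ η := by
  rcases hξ0.lt_or_gt with hneg | hpos
  · set B := insert 0 (p.roots.toFinset.filter (ξ < ·))
    set b := B.min' (insert_nonempty _ _)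
    have hb0 : b ≤ 0 := B.min'_le 0 (mem_insert_self _ _)
    have hbB : b = 0 ∨ (p.IsRoot b ∧ ξ < b) := by
      simpa only [B, mem_insert, mem_filter, Multiset.mem_toFinset, mem_roots hp] using
        B.min'_mem (insert_nonempty _ _)
    have hξb : ξ < b := by rcases hbB with h | h <;> [linarith; exact h.2]
    obtain ⟨η, hη, hroot⟩ := exists_isRoot_upsilon_mem_Ioo hα hξb
      (fun h => h.2.not_ge hb0) (Or.inr hξ) (hbB.imp_right And.left)
    refine ⟨η, hroot, Set.mem_uIoo_of_gt hη.1 (hη.2.trans_le hb0), fun s hs hsI => ?_⟩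
    rw [Set.uIcc_of_ge hη.1.le] at hsI
    by_contra hne
    have hsB : s ∈ B := mem_insert_of_mem <| mem_filter.2
      ⟨Multiset.mem_toFinset.2 ((mem_roots hp).2 hs), lt_of_le_of_ne hsI.1 (Ne.symm hne)⟩
    linarith [B.min'_le s hsB, hsI.2, hη.2]
  · set A := insert 0 (p.roots.toFinset.filter (· < ξ))
    set a := A.max' (insert_nonempty _ _)
    have ha0 : 0 ≤ a := A.le_max' 0 (mem_insert_self _ _)
    have haA : a = 0 ∨ (p.IsRoot a ∧ a < ξ) := by
      simpa only [A, mem_insert, mem_filter, Multiset.mem_toFinset, mem_roots hp] using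
        A.max'_mem (insert_nonempty _ _)
    have haξ : a < ξ := by rcases haA with h | h <;> [linarith; exact h.2]
    obtain ⟨η, hη, hroot⟩ := exists_isRoot_upsilon_mem_Ioo hα haξ
      (fun h => h.1.not_ge ha0) (haA.imp_right And.left) (Or.inr hξ)
    refine ⟨η, hroot, Set.mem_uIoo_of_lt (ha0.trans_lt hη.1) hη.2, fun s hs hsI => ?_⟩
    rw [Set.uIcc_of_le hη.2.le] at hsI
    by_contra hne
    have hsA : s ∈ A := mem_insert_of_mem <| mem_filter.2
      ⟨Multiset.mem_toFinset.2 ((mem_roots hp).2 hs), lt_of_le_of_ne hsI.2 hne⟩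
    linarith [A.le_max' s hsA, hsI.1, hη.1]

lemma exists_nodup_isRoot_upsilon (hα : 0 < α) (hp0 : p.eval 0 ≠ 0) :
    ∃ M : Multiset ℝ, M.Nodup ∧ M.card = p.roots.dedup.card ∧
      (∀ t ∈ M, (upsilon α p).IsRoot t) ∧ ∀ t ∈ M, t ∉ p.roots := by
  have hp : p ≠ 0 := by rintro rfl; simp at hp0
  have hξ0 : ∀ ξ ∈ p.roots, ξ ≠ 0 := by
    rintro ξ hξ rfl
    exact hp0 (isRoot_of_mem_roots hξ)
  choose! η hη using fun ξ (hξ : ξ ∈ p.roots) =>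
    exists_isRoot_upsilon_inInnerGap hα hp (isRoot_of_mem_roots hξ) (hξ0 ξ hξ)
  have hη' : ∀ ξ ∈ p.roots.dedup, InInnerGap p ξ (η ξ) := fun ξ hξ =>
    (hη ξ (Multiset.mem_dedup.1 hξ)).2
  refine ⟨p.roots.dedup.map η, (Multiset.nodup_dedup _).map_on fun ξ hξ ξ' hξ' h => ?_,
    Multiset.card_map _ _, ?_, ?_⟩
  · exact (hη' ξ hξ).eq (h ▸ hη' ξ' hξ') (isRoot_of_mem_roots (Multiset.mem_dedup.1 hξ))
      (isRoot_of_mem_roots (Multiset.mem_dedup.1 hξ'))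
  · simp only [Multiset.mem_map, forall_exists_index, and_imp, forall_apply_eq_imp_iff₂]
    exact fun ξ hξ => (hη ξ (Multiset.mem_dedup.1 hξ)).1
  · simp only [Multiset.mem_map, forall_exists_index, and_imp, forall_apply_eq_imp_iff₂]
    exact fun ξ hξ h => (hη' ξ hξ).not_isRoot (isRoot_of_mem_roots h)

end Upsilon

/-- For `α > 0` and `p(0) ≠ 0`, if `p` and `Υ_α p = p + (x/α) p'` have the same number
of real zeros (with multiplicity) and `p` has some multiple real zero, then
`ϑ(Υ_α p) < ϑ(p)`. -/
theorem stmt_14 (α : ℝ) (hα : 0 < α) (p : Polynomial ℝ) (hp0 : p.eval 0 ≠ 0)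
    (hθ : 0 < thetaMult p)
    (hsame : (p + Polynomial.C (1 / α) * (Polynomial.X * Polynomial.derivative p)).roots.card
      = p.roots.card) :
    thetaMult (p + Polynomial.C (1 / α) * (Polynomial.X * Polynomial.derivative p))
      < thetaMult p := by
  change (upsilon α p).roots.card = p.roots.card at hsame
  change thetaMult (upsilon α p) < thetaMult p
  have hq : upsilon α p ≠ 0 := fun h => hp0 (by simpa [eval_upsilon] using congrArg (eval 0) h)
  obtain ⟨M, hM, hMcard, hMq, hMp⟩ := exists_nodup_isRoot_upsilon hα hp0
  have hroots := roots_eq_of_card_roots_le hq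
    (fun t => (le_rootMultiplicity_iff hq).2 (pow_rootMultiplicity_sub_one_dvd_upsilon α p t))
    hM hMq hMp hMcard hsame.le
  exact thetaMult_lt_of_rootMultiplicity_le (rootMultiplicity_le_max_of_roots_eq hroots hM hMp) hθ
end

section
/- Let α > −1, K ≥ 1, and γ_0 = 1, γ_1,…,γ_K real with γ_K ≠ 0 and Σ_{j=0}^K γ_j ≠ 0. Then there exists n_0 (explicitly, n_0 = ⌊K + 1 + (|α|/(2^{1/K}−1)) max{1, (Σ_{j=0}^{K−1}|γ_j|)/|Σ_{j=0}^K γ_j|}⌋) such that for all n ≥ n_0, the sign of q_n(0) equals the sign of Σ_{j=0}^K γ_j, where q_n(x) = Σ_{j=0}^K γ_j L_{n−j}^α(x). -/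
open Polynomial Finset

/-!
`L_m^α(0) = (α+1)_m/m!` is positive and `L_{m+1}^α(0) = (1 + α/(m+1)) L_m^α(0)`, so with
`m = n - K` all the values `L_{n-j}^α(0)`, `j ≤ K`, lie within relative distance
`η = (1 + |α|/(m+1))^K - 1` of `L_m^α(0)`. Hence
`q_n(0) = P(1) L_m^α(0) + Σ_{j<K} γ_j (L_{n-j}^α(0) - L_m^α(0))` has the sign of `P(1)` as soon
as `η Σ_{j<K} |γ_j| < |P(1)|`. With `δ = 2^{1/K} - 1` and `M = max{1, Σ_{j<K}|γ_j|/|P(1)|}`,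
convexity of `x ↦ x^K` gives `(1 + δ/M)^K - 1 ≤ ((1 + δ)^K - 1)/M = 1/M`, and `n ≥ n₀` forces
`|α|/(m+1) < δ/M`.
-/

theorem Real.sign_eq_of_abs_sub_mul_lt {a b c : ℝ} (h : |a - b * c| < |b| * c) :
    Real.sign a = Real.sign b := by
  obtain ⟨hlo, hhi⟩ := abs_lt.mp h
  rcases lt_trichotomy b 0 with hb | rfl | hb
  · rw [abs_of_neg hb] at hhi
    rw [Real.sign_of_neg (by nlinarith), Real.sign_of_neg hb]
  · simp only [zero_mul, sub_zero, abs_zero] at h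
    exact absurd h (abs_nonneg a).not_gt
  · rw [abs_of_pos hb] at hlo
    rw [Real.sign_of_pos (by nlinarith), Real.sign_of_pos hb]

theorem abs_sub_le_of_abs_succ_sub_le {a : ℕ → ℝ} {ε : ℝ} (hε : 0 ≤ ε)
    (h : ∀ i, |a (i + 1) - a i| ≤ ε * |a i|) (d : ℕ) :
    |a d - a 0| ≤ ((1 + ε) ^ d - 1) * |a 0| := by
  induction d with
  | zero => simp
  | succ d ih =>
    have hd : |a d| ≤ (1 + ε) ^ d * |a 0| := by
      linarith [abs_sub_abs_le_abs_sub (a d) (a 0)]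
    calc |a (d + 1) - a 0| ≤ |a (d + 1) - a d| + |a d - a 0| := abs_sub_le _ _ _
      _ ≤ ε * ((1 + ε) ^ d * |a 0|) + ((1 + ε) ^ d - 1) * |a 0| := by
        gcongr
        exact (h d).trans (by gcongr)
      _ = ((1 + ε) ^ (d + 1) - 1) * |a 0| := by ring

theorem one_add_pow_sub_one_lt {ε δ M : ℝ} {K : ℕ} (hK : K ≠ 0) (hε : 0 ≤ ε) (hδ : 0 ≤ δ)
    (hM : 1 ≤ M) (h : ε < δ / M) : (1 + ε) ^ K - 1 < ((1 + δ) ^ K - 1) / M := by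
  have hM0 : 0 < M := by linarith
  have ht : 0 ≤ 1 - 1 / M := by rw [sub_nonneg, div_le_one hM0]; exact hM
  have hconv := (convexOn_pow K).2 (Set.mem_Ici.mpr zero_le_one)
    (Set.mem_Ici.mpr (by linarith : (0 : ℝ) ≤ 1 + δ)) ht (by positivity : (0 : ℝ) ≤ 1 / M) (by ring)
  have hlt : (1 + ε) ^ K < (1 + δ / M) ^ K := by gcongr
  calc (1 + ε) ^ K - 1 < (1 + δ / M) ^ K - 1 := by linarith
    _ = ((1 - 1 / M) • (1 : ℝ) + (1 / M) • (1 + δ)) ^ K - 1 := by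
      congr 2; simp only [smul_eq_mul]; field_simp; ring
    _ ≤ (1 - 1 / M) • (1 : ℝ) ^ K + (1 / M) • (1 + δ) ^ K - 1 := by
      simpa using hconv
    _ = ((1 + δ) ^ K - 1) / M := by simp only [smul_eq_mul]; field_simp; ring

theorem two_rpow_one_div_sub_one_pos {K : ℕ} (hK : K ≠ 0) : 0 < (2 : ℝ) ^ ((1 : ℝ) / K) - 1 :=
  sub_pos.2 (Real.one_lt_rpow one_lt_two (by positivity))

theorem one_add_div_pow_sub_one_mul_lt {α M : ℝ} {K m : ℕ} (hK : K ≠ 0) (hM : 1 ≤ M)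
    (hm : |α| / ((2 : ℝ) ^ ((1 : ℝ) / K) - 1) * M < m + 1) :
    ((1 + |α| / (m + 1)) ^ K - 1) * M < 1 := by
  set δ := (2 : ℝ) ^ ((1 : ℝ) / K) - 1 with hδ_def
  have hδ : 0 < δ := two_rpow_one_div_sub_one_pos hK
  have hδK : (1 + δ) ^ K = 2 := by
    rw [hδ_def, add_sub_cancel, one_div]
    exact Real.rpow_inv_natCast_pow zero_le_two hK
  have hε : |α| / (m + 1) < δ / M := by
    rw [div_mul_eq_mul_div, div_lt_iff₀ hδ] at hm
    rw [div_lt_div_iff₀ (by positivity) (by positivity)]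
    linarith
  have h := one_add_pow_sub_one_lt hK (by positivity) hδ.le hM hε
  rw [hδK, lt_div_iff₀ (by positivity)] at h
  linarith

theorem exists_eq_add_lt_of_floor_le {x : ℝ} (hx : 0 ≤ x) {K n : ℕ}
    (h : ⌊(K : ℝ) + 1 + x⌋ ≤ (n : ℤ)) : ∃ m : ℕ, n = m + K ∧ x < m := by
  have hlt : (K : ℝ) + x < n := by
    have hfloor := Int.sub_one_lt_floor ((K : ℝ) + 1 + x)
    have hn : ((⌊(K : ℝ) + 1 + x⌋ : ℤ) : ℝ) ≤ n := by exact_mod_cast h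
    linarith
  have hKn : K ≤ n := by exact_mod_cast (by linarith : (K : ℝ) ≤ n)
  refine ⟨n - K, by omega, ?_⟩
  rw [Nat.cast_sub hKn]
  linarith

theorem laguerre_eval_zero (α : ℝ) (n : ℕ) :
    (laguerre α n).eval 0 = (ascPochhammer ℝ n).eval (α + 1) / n.factorial := by
  rw [laguerre, eval_finsetSum, Finset.sum_eq_single 0]
  · simp
  · intro k _ hk0
    simp [zero_pow hk0]
  · simp

theorem laguerre_eval_zero_pos {α : ℝ} (hα : -1 < α) (n : ℕ) : 0 < (laguerre α n).eval 0 := by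
  rw [laguerre_eval_zero]
  exact div_pos (ascPochhammer_pos _ _ (by linarith)) (by positivity)

theorem laguerre_eval_zero_succ (α : ℝ) (n : ℕ) :
    (laguerre α (n + 1)).eval 0 = (1 + α / (n + 1)) * (laguerre α n).eval 0 := by
  rw [laguerre_eval_zero, laguerre_eval_zero, ascPochhammer_succ_eval, Nat.factorial_succ]
  push_cast
  field_simp
  ring

theorem abs_laguerre_eval_zero_add_sub_le (α : ℝ) (m d : ℕ) :
    |(laguerre α (m + d)).eval 0 - (laguerre α m).eval 0|
      ≤ ((1 + |α| / (m + 1)) ^ d - 1) * |(laguerre α m).eval 0| := by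
  refine abs_sub_le_of_abs_succ_sub_le (a := fun i => (laguerre α (m + i)).eval 0)
    (by positivity) (fun i => ?_) d
  rw [← add_assoc, laguerre_eval_zero_succ, ← sub_one_mul, add_sub_cancel_left, abs_mul, abs_div,
    abs_of_pos (by positivity : (0 : ℝ) < (m + i : ℕ) + 1)]
  gcongr
  linarith [(Nat.cast_nonneg i : (0 : ℝ) ≤ i)]

theorem sign_sum_mul_eq_sign_sum {γ c : ℕ → ℝ} {K : ℕ} {η : ℝ} (hc : 0 < c K)
    (hclose : ∀ j < K, |c j - c K| ≤ η * c K)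
    (hη : η * ∑ j ∈ range K, |γ j| < |∑ j ∈ range (K + 1), γ j|) :
    Real.sign (∑ j ∈ range (K + 1), γ j * c j) = Real.sign (∑ j ∈ range (K + 1), γ j) := by
  refine Real.sign_eq_of_abs_sub_mul_lt (c := c K) ?_
  have hsplit : ∑ j ∈ range (K + 1), γ j * c j - (∑ j ∈ range (K + 1), γ j) * c K
      = ∑ j ∈ range K, γ j * (c j - c K) := by
    rw [Finset.sum_mul, ← Finset.sum_sub_distrib, Finset.sum_range_succ, sub_self, add_zero]
    exact Finset.sum_congr rfl fun j _ => by ring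
  calc |∑ j ∈ range (K + 1), γ j * c j - (∑ j ∈ range (K + 1), γ j) * c K|
      ≤ ∑ j ∈ range K, |γ j| * |c j - c K| := by
        rw [hsplit]
        exact (Finset.abs_sum_le_sum_abs _ _).trans_eq (by simp only [abs_mul])
    _ ≤ ∑ j ∈ range K, |γ j| * (η * c K) :=
        Finset.sum_le_sum fun j hj => by gcongr; exact hclose j (Finset.mem_range.mp hj)
    _ = η * (∑ j ∈ range K, |γ j|) * c K := by rw [← Finset.sum_mul]; ring
    _ < |∑ j ∈ range (K + 1), γ j| * c K := by gcongr

theorem stmt_15_general (α : ℝ) (hα : -1 < α) (K : ℕ) (hK : 1 ≤ K) (γ : ℕ → ℝ)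
    (hP1 : ∑ j ∈ Finset.range (K + 1), γ j ≠ 0) :
    ∀ n : ℕ,
      (⌊(K : ℝ) + 1 + (|α| / ((2 : ℝ) ^ ((1 : ℝ) / (K : ℝ)) - 1)) *
          max 1 ((∑ j ∈ Finset.range K, |γ j|) / |∑ j ∈ Finset.range (K + 1), γ j|)⌋
        ≤ (n : ℤ)) →
      Real.sign ((∑ j ∈ Finset.range (K + 1),
          Polynomial.C (γ j) * laguerre α (n - j)).eval 0)
        = Real.sign (∑ j ∈ Finset.range (K + 1), γ j) := by
  intro n hn
  set S := ∑ j ∈ Finset.range (K + 1), γ j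
  set T := ∑ j ∈ Finset.range K, |γ j|
  set M := max 1 (T / |S|)
  have hK0 : K ≠ 0 := by omega
  have hS : 0 < |S| := abs_pos.2 hP1
  have hM : 1 ≤ M := le_max_left _ _
  have hTM : T ≤ M * |S| := (div_le_iff₀ hS).1 (le_max_right _ _)
  have hδ := two_rpow_one_div_sub_one_pos hK0
  obtain ⟨m, rfl, hm⟩ := exists_eq_add_lt_of_floor_le (by positivity) hn
  set η := (1 + |α| / ((m : ℝ) + 1)) ^ K - 1
  have hη : η * M < 1 := one_add_div_pow_sub_one_mul_lt hK0 hM (hm.trans (lt_add_one _))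
  have hη0 : 0 ≤ η := sub_nonneg.2 (one_le_pow₀ (le_add_of_nonneg_right (by positivity)))
  simp only [eval_finsetSum, eval_mul, eval_C]
  refine sign_sum_mul_eq_sign_sum (η := η) (laguerre_eval_zero_pos hα _) (fun j hj => ?_) ?_
  · have h := abs_laguerre_eval_zero_add_sub_le α m (K - j)
    rw [← Nat.add_sub_assoc hj.le, abs_of_pos (laguerre_eval_zero_pos hα _)] at h
    simp only [Nat.add_sub_cancel]
    refine h.trans (mul_le_mul_of_nonneg_right (sub_le_sub_right ?_ 1)
      (laguerre_eval_zero_pos hα m).le)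
    exact pow_le_pow_right₀ (le_add_of_nonneg_right (by positivity)) (Nat.sub_le K j)
  · calc η * T ≤ η * (M * |S|) := by gcongr
      _ = η * M * |S| := by ring
      _ < |S| := mul_lt_of_lt_one_left hS hη

/-- Sign of `q_n(0)` where `q_n = Σ_{j=0}^K γ_j L_{n-j}^α`: for
`n ≥ n₀ = ⌊K + 1 + (|α|/(2^{1/K} - 1)) max{1, Σ_{j<K}|γ_j|/|Σ γ_j|}⌋`, the sign of
`q_n(0)` equals the sign of `Σ_{j=0}^K γ_j = P(1)`. -/
theorem stmt_15 (α : ℝ) (hα : -1 < α) (K : ℕ) (hK : 1 ≤ K) (γ : ℕ → ℝ)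
    (hγ0 : γ 0 = 1) (hγK : γ K ≠ 0)
    (hP1 : ∑ j ∈ Finset.range (K + 1), γ j ≠ 0) :
    ∀ n : ℕ,
      (⌊(K : ℝ) + 1 + (|α| / ((2 : ℝ) ^ ((1 : ℝ) / (K : ℝ)) - 1)) *
          max 1 ((∑ j ∈ Finset.range K, |γ j|) / |∑ j ∈ Finset.range (K + 1), γ j|)⌋
        ≤ (n : ℤ)) →
      Real.sign ((∑ j ∈ Finset.range (K + 1),
          Polynomial.C (γ j) * laguerre α (n - j)).eval 0)
        = Real.sign (∑ j ∈ Finset.range (K + 1), γ j) :=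
  stmt_15_general α hα K hK γ hP1
end

section
/- Let K ≥ 1 and γ_0 = 1, γ_1,…,γ_K real with γ_K ≠ 0, and let θ be a real zero of P(x) = Σ_{j=0}^K γ_j x^{K−j}. Define γ̃_j = Σ_{i=0}^j θ^i γ_{j−i} for 0 ≤ j ≤ K−1. Then for all n ≥ K, Σ_{j=0}^K γ_j L_{n−j}^α(x) = Σ_{j=0}^{K−1} γ̃_j L_{n−j}^{α−1}(x) − (1−θ) (d/dx)[Σ_{j=0}^{K−1} γ̃_j L_{n−j}^{α−1}(x)]. -/
open Polynomial Finset

/-!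
Both sides are Laguerre expansions, so the identity is linear algebra on top of two classical
relations: `L_n^α = L_n^{α-1} - (L_n^{α-1})'` (from `(L_n^α)' = -L_{n-1}^{α+1}` and
`L_n^{α-1} = L_n^α - L_{n-1}^α`) and its consequence `(L_{n+1}^β)' = (L_n^β)' - L_n^β`.
Applying the first one turns the left side into `Q - Q'` with `Q = Σ γ_j L_{n-j}^{α-1}`.
Since `γ_j = γ̃_j - θ γ̃_{j-1}` and `γ̃_K = P(θ) = 0`, summation by parts gives `Q = q - θ r`,
where `q = Σ γ̃_j L_{n-j}^{α-1}` and `r = Σ γ̃_j L_{n-j-1}^{α-1}`; the second relation gives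
`r' = q' + r`, hence `Q - Q' = q - (1 - θ) q'`.
-/

open scoped Nat

lemma ascPochhammer_succ_eval_left {S : Type*} [CommSemiring S] (m : ℕ) (a : S) :
    (ascPochhammer S (m + 1)).eval a = a * (ascPochhammer S m).eval (a + 1) := by
  rw [ascPochhammer_succ_left, eval_mul, eval_X, eval_comp, eval_add, eval_X, eval_one]

lemma laguerre_coeff_of_lt {α : ℝ} {n k : ℕ} (h : n < k) : (laguerre α n).coeff k = 0 := by
  simp only [laguerre, finsetSum_coeff, coeff_C_mul, coeff_X_pow]
  exact Finset.sum_eq_zero fun i hi => by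
    rw [if_neg (by rw [Finset.mem_range] at hi; omega), mul_zero]

lemma laguerre_coeff_add (α : ℝ) (k m : ℕ) :
    (laguerre α (k + m)).coeff k =
      (-1) ^ k * (ascPochhammer ℝ m).eval (α + k + 1) / (m ! * k !) := by
  simp only [laguerre, finsetSum_coeff, coeff_C_mul, coeff_X_pow, mul_ite, mul_one, mul_zero,
    Finset.sum_ite_eq, Finset.mem_range, Nat.add_sub_cancel_left]
  rw [if_pos (by omega)]

lemma laguerre_zero (α : ℝ) : laguerre α 0 = 1 := by
  simp [laguerre]

lemma derivative_laguerre_succ (α : ℝ) (n : ℕ) :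
    derivative (laguerre α (n + 1)) = -laguerre (α + 1) n := by
  ext k
  rw [coeff_derivative, coeff_neg]
  rcases le_or_gt k n with h | h
  · obtain ⟨m, rfl⟩ := Nat.exists_eq_add_of_le h
    rw [show k + m + 1 = (k + 1) + m by omega, laguerre_coeff_add, laguerre_coeff_add,
      show α + ((k + 1 : ℕ) : ℝ) + 1 = α + 1 + k + 1 by push_cast; ring, Nat.factorial_succ]
    push_cast
    field_simp
    ring
  · rw [laguerre_coeff_of_lt (by omega), laguerre_coeff_of_lt h]
    simp

lemma laguerre_sub_one_succ (α : ℝ) (n : ℕ) :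
    laguerre (α - 1) (n + 1) = laguerre α (n + 1) - laguerre α n := by
  ext k
  rw [coeff_sub]
  rcases lt_trichotomy k (n + 1) with h | rfl | h
  · obtain ⟨m, rfl⟩ := Nat.exists_eq_add_of_le (Nat.le_of_lt_succ h)
    have h₁ : (ascPochhammer ℝ (m + 1)).eval (α - 1 + k + 1) =
        (α + k) * (ascPochhammer ℝ m).eval (α + k + 1) := by
      rw [ascPochhammer_succ_eval_left]; ring_nf
    rw [add_assoc, laguerre_coeff_add, laguerre_coeff_add, laguerre_coeff_add, h₁,
      ascPochhammer_succ_eval, Nat.factorial_succ]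
    push_cast
    field_simp
    ring
  · have h₁ := laguerre_coeff_add (α - 1) (n + 1) 0
    have h₂ := laguerre_coeff_add α (n + 1) 0
    rw [add_zero] at h₁ h₂
    rw [h₁, h₂, laguerre_coeff_of_lt (Nat.lt_succ_self n)]
    simp
  · rw [laguerre_coeff_of_lt h, laguerre_coeff_of_lt h, laguerre_coeff_of_lt (by omega)]
    simp

lemma laguerre_eq_sub_derivative (α : ℝ) (n : ℕ) :
    laguerre α n = laguerre (α - 1) n - derivative (laguerre (α - 1) n) := by
  cases n with
  | zero => simp [laguerre_zero]
  | succ n => rw [derivative_laguerre_succ, sub_add_cancel, laguerre_sub_one_succ]; ring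

lemma derivative_laguerre_succ_eq_sub (α : ℝ) (n : ℕ) :
    derivative (laguerre α (n + 1)) = derivative (laguerre α n) - laguerre α n := by
  rw [derivative_laguerre_succ, laguerre_eq_sub_derivative (α + 1), add_sub_cancel_right]
  ring

section Horner

variable {R M : Type*} [CommRing R] [AddCommGroup M] [Module R M]

/-- `γ̃_j`: the `j`-th value of Horner's scheme for `P` at `θ`. Thus `γ̃_K = P(θ)`, and
`γ̃_0, …, γ̃_{K-1}` are the coefficients of `P(x) / (x - θ)` when `P(θ) = 0`. -/
def hornerCoeff (γ : ℕ → R) (θ : R) (j : ℕ) : R :=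
  ∑ i ∈ range (j + 1), θ ^ i * γ (j - i)

lemma hornerCoeff_zero (γ : ℕ → R) (θ : R) : hornerCoeff γ θ 0 = γ 0 := by
  simp [hornerCoeff]

lemma hornerCoeff_succ (γ : ℕ → R) (θ : R) (j : ℕ) :
    hornerCoeff γ θ (j + 1) = γ (j + 1) + θ * hornerCoeff γ θ j := by
  rw [hornerCoeff, sum_range_succ', hornerCoeff, mul_sum]
  simp only [pow_zero, one_mul, Nat.sub_zero, pow_succ', Nat.add_sub_add_right, mul_assoc]
  exact add_comm _ _

lemma hornerCoeff_eq_eval (γ : ℕ → R) (θ : R) (K : ℕ) :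
    hornerCoeff γ θ K = (∑ j ∈ range (K + 1), C (γ j) * X ^ (K - j)).eval θ := by
  rw [hornerCoeff, eval_finsetSum, ← sum_range_reflect]
  refine sum_congr rfl fun i hi => ?_
  rw [mem_range] at hi
  simp only [eval_mul, eval_C, eval_pow, eval_X, Nat.add_sub_cancel,
    Nat.sub_sub_self (Nat.le_of_lt_succ hi), mul_comm]

lemma sum_smul_eq_hornerCoeff (γ : ℕ → R) (θ : R) (p : ℕ → M) (K : ℕ) :
    ∑ j ∈ range (K + 1), γ j • p j =
      ∑ j ∈ range (K + 1), hornerCoeff γ θ j • p j -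
        θ • ∑ j ∈ range K, hornerCoeff γ θ j • p (j + 1) := by
  induction K with
  | zero => simp [hornerCoeff_zero]
  | succ K ih =>
    rw [sum_range_succ, ih, sum_range_succ (fun j => hornerCoeff γ θ j • p j) (K + 1),
      sum_range_succ (fun j => hornerCoeff γ θ j • p (j + 1)) K, hornerCoeff_succ]
    module

end Horner

lemma sum_smul_laguerre_of_hornerCoeff_eq_zero (α : ℝ) (γ : ℕ → ℝ) {θ : ℝ} {K n : ℕ}
    (hθ : hornerCoeff γ θ K = 0) (hn : K ≤ n) :
    ∑ j ∈ range (K + 1), γ j • laguerre α (n - j) =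
      ∑ j ∈ range K, hornerCoeff γ θ j • laguerre (α - 1) (n - j) -
        (1 - θ) • derivative (∑ j ∈ range K, hornerCoeff γ θ j • laguerre (α - 1) (n - j)) := by
  set q := ∑ j ∈ range K, hornerCoeff γ θ j • laguerre (α - 1) (n - j)
  set r := ∑ j ∈ range K, hornerCoeff γ θ j • laguerre (α - 1) (n - (j + 1))
  have hsplit : ∑ j ∈ range (K + 1), γ j • laguerre (α - 1) (n - j) = q - θ • r := by
    rw [sum_smul_eq_hornerCoeff γ θ, sum_range_succ, hθ, zero_smul, add_zero]
  have hr : derivative r = derivative q + r := by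
    simp only [q, r, derivative_sum, derivative_smul, ← sum_add_distrib, ← smul_add]
    refine sum_congr rfl fun j hj => ?_
    rw [show n - j = n - (j + 1) + 1 by have := mem_range.mp hj; omega,
      derivative_laguerre_succ_eq_sub, sub_add_cancel]
  calc ∑ j ∈ range (K + 1), γ j • laguerre α (n - j)
      = ∑ j ∈ range (K + 1), γ j • laguerre (α - 1) (n - j) -
          derivative (∑ j ∈ range (K + 1), γ j • laguerre (α - 1) (n - j)) := by
        simp only [laguerre_eq_sub_derivative α, smul_sub, sum_sub_distrib, derivative_sum,
          derivative_smul]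
    _ = q - (1 - θ) • derivative q := by
        rw [hsplit, derivative_sub, derivative_smul, hr]
        module

theorem stmt_16_general (α : ℝ) (K : ℕ) (γ : ℕ → ℝ) (θ : ℝ)
    (hθ : (∑ j ∈ Finset.range (K + 1),
        Polynomial.C (γ j) * Polynomial.X ^ (K - j)).eval θ = 0) :
    ∀ n, K ≤ n →
      ∑ j ∈ Finset.range (K + 1), Polynomial.C (γ j) * laguerre α (n - j)
        = (∑ j ∈ Finset.range K,
            Polynomial.C (∑ i ∈ Finset.range (j + 1), θ ^ i * γ (j - i)) *
              laguerre (α - 1) (n - j))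
          - Polynomial.C (1 - θ) * Polynomial.derivative
            (∑ j ∈ Finset.range K,
              Polynomial.C (∑ i ∈ Finset.range (j + 1), θ ^ i * γ (j - i)) *
                laguerre (α - 1) (n - j)) := fun n hn => by
  simpa only [smul_eq_C_mul, hornerCoeff] using
    sum_smul_laguerre_of_hornerCoeff_eq_zero α γ ((hornerCoeff_eq_eval γ θ K).trans hθ) hn

/-- Decomposition of `q_n^{α;γ} = Σ_{j=0}^K γ_j L_{n-j}^α` associated to a real zero `θ`
of `P(x) = Σ_{j=0}^K γ_j x^{K-j}`: with `γ̃_j = Σ_{i=0}^j θ^i γ_{j-i}`,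
`q_n^{α;γ} = q_n^{α-1;γ̃} - (1-θ) (q_n^{α-1;γ̃})'` for all `n ≥ K`. -/
theorem stmt_16 (α : ℝ) (K : ℕ) (hK : 1 ≤ K) (γ : ℕ → ℝ)
    (hγ0 : γ 0 = 1) (hγK : γ K ≠ 0) (θ : ℝ)
    (hθ : (∑ j ∈ Finset.range (K + 1),
        Polynomial.C (γ j) * Polynomial.X ^ (K - j)).eval θ = 0) :
    ∀ n, K ≤ n →
      ∑ j ∈ Finset.range (K + 1), Polynomial.C (γ j) * laguerre α (n - j)
        = (∑ j ∈ Finset.range K,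
            Polynomial.C (∑ i ∈ Finset.range (j + 1), θ ^ i * γ (j - i)) *
              laguerre (α - 1) (n - j))
          - Polynomial.C (1 - θ) * Polynomial.derivative
            (∑ j ∈ Finset.range K,
              Polynomial.C (∑ i ∈ Finset.range (j + 1), θ ^ i * γ (j - i)) *
                laguerre (α - 1) (n - j)) :=
  stmt_16_general α K γ θ hθ
end

section
/- For α > −1 and n ≥ 1, if a real polynomial p has only positive zeros, then the polynomial Ω_α p(x) = −(d/dx)(α p(x) + x p'(x)) has only positive zeros. -/
/-!
Since `(α p + x p')' = (α + 1) p' + x p''`, it suffices to show that `p ↦ p'` and, for `β > 0`,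
`r ↦ β r + x r'` preserve the property of having only real zeros, all of them positive.
Both follow by counting zeros: Rolle's theorem applied to `p`, resp. to `x ^ β r(x)` (which also
vanishes at `0` and has derivative `x ^ (β - 1) (β r + x r')`), gives a new zero strictly between
consecutive zeros, and a zero of multiplicity `m` survives with multiplicity at least `m - 1`.
Together these account for as many positive zeros as the degree allows.
-/

open Polynomial Finset

namespace Polynomial

def SplitsWithRootsIn (U : Set ℝ) (p : ℝ[X]) : Prop :=
  Multiset.card p.roots = p.natDegree ∧ ∀ t ∈ p.roots, t ∈ U

theorem splitsWithRootsIn_zero (U : Set ℝ) : SplitsWithRootsIn U 0 := by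
  simp [SplitsWithRootsIn]

theorem SplitsWithRootsIn.neg {U : Set ℝ} {p : ℝ[X]} (h : SplitsWithRootsIn U p) :
    SplitsWithRootsIn U (-p) := by
  rwa [SplitsWithRootsIn, roots_neg, natDegree_neg]

open scoped Classical in
theorem splitsWithRootsIn_of_natDegree_le {U : Set ℝ} {q : ℝ[X]}
    (h : q.natDegree ≤ Multiset.card (q.roots.filter (· ∈ U))) : SplitsWithRootsIn U q := by
  have hfilter : q.roots.filter (· ∈ U) = q.roots :=
    Multiset.eq_of_le_of_card_le (Multiset.filter_le _ _) (h.trans' (card_roots' q))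
  refine ⟨le_antisymm (card_roots' q) (hfilter ▸ h), fun t ht => ?_⟩
  rw [← hfilter] at ht
  exact (Multiset.mem_filter.1 ht).2

open scoped Classical in
theorem card_roots_add_card_le {U : Set ℝ} {r q : ℝ[X]} (hq : q ≠ 0)
    (hrU : ∀ t ∈ r.roots, t ∈ U) {s : Finset ℝ} (hsr : r.roots.toFinset ⊆ s)
    (hmult : ∀ x, (X - C x) ^ (r.rootMultiplicity x - 1) ∣ q)
    (hrolle : ∀ x ∈ s, ∀ y ∈ s, x < y → ∃ z ∈ Set.Ioo x y, z ∈ U ∧ q.IsRoot z) :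
    Multiset.card r.roots + #s ≤
      Multiset.card (q.roots.filter (· ∈ U)) + #r.roots.toFinset + 1 := by
  set qU := q.roots.filter (· ∈ U)
  have hnew : #s ≤ #(qU.toFinset \ s) + 1 := by
    refine card_le_sdiff_of_interleaved fun x hx y hy hxy _ => ?_
    obtain ⟨z, hz, hzU, hqz⟩ := hrolle x hx y hy hxy
    exact ⟨z, Multiset.mem_toFinset.2 (Multiset.mem_filter.2 ⟨(mem_roots hq).2 hqz, hzU⟩),
      hz.1, hz.2⟩
  -- a root of `r` loses at most one from its multiplicity; the points of `qU.toFinset \ s` are new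
  have hcount : r.roots + (qU.toFinset \ s).val ≤ qU + r.roots.toFinset.val := by
    refine Multiset.le_iff_count.2 fun x => ?_
    simp only [Multiset.count_add, Multiset.count_eq_of_nodup (Finset.nodup _), Finset.mem_val]
    by_cases hx : x ∈ r.roots
    · have hxs : x ∈ s := hsr (Multiset.mem_toFinset.2 hx)
      simp only [qU, Multiset.count_filter_of_pos (hrU x hx), count_roots,
        Multiset.mem_toFinset.2 hx, Finset.mem_sdiff, hxs, not_true_eq_false, and_false, if_false,
        if_true]
      have := (le_rootMultiplicity_iff hq).2 (hmult x)
      omega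
    · simp only [Multiset.count_eq_zero.2 hx, Multiset.mem_toFinset, hx, if_false, zero_add,
        add_zero, Finset.mem_sdiff]
      split_ifs with h
      · exact Multiset.count_pos.2 h.1
      · exact Nat.zero_le _
  have := Multiset.card_le_card hcount
  simp only [Multiset.card_add, Finset.card_val] at this
  omega

theorem splitsWithRootsIn_of_rolle {U : Set ℝ} {r q : ℝ[X]} (hr : SplitsWithRootsIn U r)
    {s : Finset ℝ} (hsr : r.roots.toFinset ⊆ s)
    (hdeg : q.natDegree + #r.roots.toFinset + 1 ≤ r.natDegree + #s)
    (hmult : ∀ x, (X - C x) ^ (r.rootMultiplicity x - 1) ∣ q)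
    (hrolle : ∀ x ∈ s, ∀ y ∈ s, x < y → ∃ z ∈ Set.Ioo x y, z ∈ U ∧ q.IsRoot z) :
    SplitsWithRootsIn U q := by
  rcases eq_or_ne q 0 with rfl | hq
  · exact splitsWithRootsIn_zero U
  have := card_roots_add_card_le hq hr.2 hsr hmult hrolle
  have := hr.1
  exact splitsWithRootsIn_of_natDegree_le (by omega)

theorem hasDerivAt_rpow_mul_eval {β z : ℝ} (hz : 0 < z) (r : ℝ[X]) :
    HasDerivAt (fun x => x ^ β * r.eval x)
      (z ^ (β - 1) * (C β * r + X * derivative r).eval z) z := by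
  have hzβ : z ^ β = z ^ (β - 1) * z := by
    rw [← Real.rpow_add_one hz.ne', sub_add_cancel]
  refine ((Real.hasDerivAt_rpow_const (Or.inl hz.ne')).mul (r.hasDerivAt z)).congr_deriv ?_
  simp only [eval_add, eval_mul, eval_C, eval_X, hzβ]
  ring

theorem exists_isRoot_C_mul_add_X_mul_derivative {β x y : ℝ} (hβ : 0 < β) (hx : 0 ≤ x)
    (hxy : x < y) {r : ℝ[X]} (hr : x ^ β * r.eval x = y ^ β * r.eval y) :
    ∃ z ∈ Set.Ioo x y, (C β * r + X * derivative r).IsRoot z := by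
  have hcont : Continuous fun x : ℝ => x ^ β * r.eval x :=
    (continuous_id.rpow_const fun _ => Or.inr hβ.le).mul r.continuous
  obtain ⟨z, hz, hdz⟩ := exists_deriv_eq_zero hxy hcont.continuousOn hr
  have hz0 : 0 < z := hx.trans_lt hz.1
  refine ⟨z, hz, ?_⟩
  rw [(hasDerivAt_rpow_mul_eval hz0 r).deriv] at hdz
  exact (mul_eq_zero.1 hdz).resolve_left (Real.rpow_pos_of_pos hz0 _).ne'

theorem coeff_C_mul_add_X_mul_derivative (β : ℝ) (r : ℝ[X]) (n : ℕ) :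
    (C β * r + X * derivative r).coeff n = (β + n) * r.coeff n := by
  rcases n with _ | n
  · simp
  · simp [coeff_derivative]
    ring

theorem natDegree_C_mul_add_X_mul_derivative_le (β : ℝ) (r : ℝ[X]) :
    (C β * r + X * derivative r).natDegree ≤ r.natDegree :=
  natDegree_le_iff_coeff_eq_zero.2 fun n hn => by
    rw [coeff_C_mul_add_X_mul_derivative, coeff_eq_zero_of_natDegree_lt hn, mul_zero]

theorem SplitsWithRootsIn.C_mul_add_X_mul_derivative {β : ℝ} (hβ : 0 < β) {r : ℝ[X]}
    (hr : SplitsWithRootsIn (Set.Ioi 0) r) :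
    SplitsWithRootsIn (Set.Ioi 0) (C β * r + X * derivative r) := by
  have h0 : (0 : ℝ) ∉ r.roots.toFinset := fun h =>
    lt_irrefl (0 : ℝ) (hr.2 0 (Multiset.mem_toFinset.1 h))
  have hvanish : ∀ x ∈ insert 0 r.roots.toFinset, 0 ≤ x ∧ x ^ β * r.eval x = 0 := by
    simp only [Finset.mem_insert, Multiset.mem_toFinset]
    rintro x (rfl | hx)
    · exact ⟨le_rfl, by rw [Real.zero_rpow hβ.ne', zero_mul]⟩
    · exact ⟨(hr.2 x hx).le, by rw [(mem_roots (ne_zero_of_mem_roots hx)).1 hx, mul_zero]⟩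
  refine splitsWithRootsIn_of_rolle hr (subset_insert 0 _) ?_ (fun x => ?_) fun x hx y hy hxy => ?_
  · rw [card_insert_of_notMem h0]
    have := natDegree_C_mul_add_X_mul_derivative_le β r
    omega
  · have hdvd := pow_rootMultiplicity_dvd r x
    exact ((pow_dvd_pow _ (Nat.sub_le _ _)).trans hdvd).mul_left _ |>.add
      ((pow_sub_one_dvd_derivative_of_pow_dvd hdvd).mul_left X)
  · obtain ⟨hx0, hgx⟩ := hvanish x hx
    obtain ⟨z, hz, hqz⟩ := exists_isRoot_C_mul_add_X_mul_derivative hβ hx0 hxy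
      (hgx.trans (hvanish y hy).2.symm)
    exact ⟨z, hz, hx0.trans_lt hz.1, hqz⟩

theorem SplitsWithRootsIn.derivative {U : Set ℝ} (hU : U.OrdConnected) {p : ℝ[X]}
    (hp : SplitsWithRootsIn U p) : SplitsWithRootsIn U (derivative p) := by
  rcases Nat.eq_zero_or_pos p.natDegree with h0 | hpos
  · rw [derivative_of_natDegree_zero h0]
    exact splitsWithRootsIn_zero U
  refine splitsWithRootsIn_of_rolle hp subset_rfl ?_
    (fun x => pow_sub_one_dvd_derivative_of_pow_dvd (pow_rootMultiplicity_dvd p x))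
    fun x hx y hy hxy => ?_
  · have := natDegree_derivative_le p
    omega
  · have hp0 : p ≠ 0 := ne_zero_of_natDegree_gt hpos
    rw [Multiset.mem_toFinset] at hx hy
    obtain ⟨z, hz, hdz⟩ := exists_deriv_eq_zero hxy p.continuousOn
      (((mem_roots hp0).1 hx).trans ((mem_roots hp0).1 hy).symm)
    exact ⟨z, hz, hU.out (hp.2 x hx) (hp.2 y hy) (Set.Ioo_subset_Icc_self hz),
      by rwa [IsRoot, ← p.deriv]⟩

end Polynomial

theorem stmt_18_general (α : ℝ) (hα : -1 < α) (p : Polynomial ℝ)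
    (hreal : p.roots.card = p.natDegree) (hpos : ∀ t ∈ p.roots, 0 < t) :
    (-(Polynomial.derivative
        (Polynomial.C α * p + Polynomial.X * Polynomial.derivative p))).roots.card
      = (-(Polynomial.derivative
        (Polynomial.C α * p + Polynomial.X * Polynomial.derivative p))).natDegree ∧
    ∀ t ∈ (-(Polynomial.derivative
        (Polynomial.C α * p + Polynomial.X * Polynomial.derivative p))).roots, 0 < t := by
  have hΩ : derivative (C α * p + X * derivative p)
      = C (α + 1) * derivative p + X * derivative (derivative p) := by
    rw [derivative_add, derivative_C_mul, derivative_mul, derivative_X, C_add, C_1]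
    ring
  rw [hΩ]
  have hp' := SplitsWithRootsIn.derivative Set.ordConnected_Ioi ⟨hreal, hpos⟩
  exact (hp'.C_mul_add_X_mul_derivative (by linarith)).neg

/-- For `α > -1`, if a real polynomial `p` of degree at least 1 has only positive zeros,
then `Ω_α p = -(α p + x p')'` has only positive zeros. -/
theorem stmt_18 (α : ℝ) (hα : -1 < α) (p : Polynomial ℝ) (hdeg : 1 ≤ p.natDegree)
    (hreal : p.roots.card = p.natDegree) (hpos : ∀ t ∈ p.roots, 0 < t) :
    (-(Polynomial.derivative
        (Polynomial.C α * p + Polynomial.X * Polynomial.derivative p))).roots.card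
      = (-(Polynomial.derivative
        (Polynomial.C α * p + Polynomial.X * Polynomial.derivative p))).natDegree ∧
    ∀ t ∈ (-(Polynomial.derivative
        (Polynomial.C α * p + Polynomial.X * Polynomial.derivative p))).roots, 0 < t :=
  stmt_18_general α hα p hreal hpos
end

section
/- For α ≥ 0, the operator Ω_α p = −(d/dx)(α p + x p') is complex zero decreasing: for every real polynomial p, the number of non-real zeros of Ω_α p is at most the number of non-real zeros of p. -/
open Polynomial Finset

/-!
Write `q = p'` and `β = α + 1`, so that `-Ω_α p = β q + x q'`. For `β > 0` the function
`|x|^β q(x)` vanishes at `0` and at every real root of `q`, and its derivative at `x ≠ 0` is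
`|x|^β / x · (β q + x q')(x)`. Rolle's theorem therefore puts a root of `β q + x q'` strictly
between any two consecutive points of `{0} ∪ roots q`; since in addition a root of `q` of order `m`
is a root of `β q + x q'` of order at least `m` at `0` and `m - 1` elsewhere, `β q + x q'` has at
least as many real roots as `q`, hence at least `#roots p - 1`. As its degree is at most
`deg p - 1` and a real polynomial has `deg - #(real roots)` non-real roots, the number of
non-real roots cannot increase.
-/

namespace Polynomial

section Semiring

variable {R : Type*} [CommSemiring R]

/-- `eulerOp β q = x^(1-β) (x^β q)'`. -/
noncomputable def eulerOp (β : R) (q : R[X]) : R[X] := C β * q + X * derivative q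

variable (β : R) (q : R[X])

theorem coeff_eulerOp (n : ℕ) : (eulerOp β q).coeff n = (β + n) * q.coeff n := by
  rcases n with _ | n
  · simp [eulerOp]
  · simp only [eulerOp, coeff_add, coeff_C_mul, coeff_X_mul, coeff_derivative]
    push_cast
    ring

theorem derivative_C_mul_add_X_mul_derivative (p : R[X]) :
    derivative (C β * p + X * derivative p) = eulerOp (β + 1) (derivative p) := by
  simp only [eulerOp, derivative_add, derivative_mul, derivative_C, derivative_X, C_add, C_1]
  ring

theorem natDegree_eulerOp_le : (eulerOp β q).natDegree ≤ q.natDegree :=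
  natDegree_le_iff_coeff_eq_zero.2 fun n hn => by
    rw [coeff_eulerOp, coeff_eq_zero_of_natDegree_lt hn, mul_zero]

theorem eulerOp_ne_zero [NoZeroDivisors R] {q : R[X]} (hq : q ≠ 0)
    (hβ : β + q.natDegree ≠ 0) : eulerOp β q ≠ 0 := fun h => by
  have := congrArg (coeff · q.natDegree) h
  simp only [coeff_eulerOp, coeff_zero, coeff_natDegree] at this
  exact mul_ne_zero hβ (leadingCoeff_ne_zero.2 hq) this

theorem X_pow_dvd_eulerOp {n : ℕ} (h : X ^ n ∣ q) : X ^ n ∣ eulerOp β q := by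
  rw [X_pow_dvd_iff] at h ⊢
  intro d hd
  rw [coeff_eulerOp, h d hd, mul_zero]

end Semiring

section Ring

variable {R : Type*} [CommRing R] {β : R} {q : R[X]}

theorem rootMultiplicity_zero_le_rootMultiplicity_eulerOp (hS : eulerOp β q ≠ 0) :
    q.rootMultiplicity 0 ≤ (eulerOp β q).rootMultiplicity 0 := by
  rw [le_rootMultiplicity_iff hS]
  simpa using X_pow_dvd_eulerOp β q (by simpa using pow_rootMultiplicity_dvd q 0)

theorem rootMultiplicity_le_rootMultiplicity_eulerOp_add_one (hS : eulerOp β q ≠ 0) (x : R) :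
    q.rootMultiplicity x ≤ (eulerOp β q).rootMultiplicity x + 1 := by
  have hq := pow_rootMultiplicity_dvd q x
  have : (X - C x) ^ (q.rootMultiplicity x - 1) ∣ eulerOp β q :=
    dvd_add (((pow_dvd_pow _ (Nat.sub_le _ 1)).trans hq).mul_left _)
      ((pow_sub_one_dvd_derivative_of_pow_dvd hq).mul_left _)
  have := (le_rootMultiplicity_iff hS).2 this
  omega

end Ring

theorem hasDerivAt_abs_rpow_mul_eval (β : ℝ) (q : ℝ[X]) {z : ℝ} (hz : z ≠ 0) :
    HasDerivAt (fun t => |t| ^ β * q.eval t) (|z| ^ β / z * (eulerOp β q).eval z) z := by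
  refine (((hasDerivAt_abs hz).rpow_const (Or.inl (abs_ne_zero.2 hz))).mul
    (q.hasDerivAt z)).congr_deriv ?_
  rw [Real.rpow_sub_one (abs_ne_zero.2 hz)]
  simp only [eulerOp, eval_add, eval_mul, eval_C, eval_X]
  field_simp
  rcases hz.lt_or_gt with h | h
  · simp only [h, sign_neg, SignType.coe_neg, SignType.coe_one, neg_mul, one_mul, abs_of_neg]
    ring
  · simp only [h, sign_pos, SignType.coe_one, one_mul, abs_of_pos]
    ring

theorem card_insert_zero_roots_toFinset_le_card_roots_eulerOp_sdiff_succ {β : ℝ} (hβ : 0 < β)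
    {q : ℝ[X]} (hq : q ≠ 0) :
    (insert 0 q.roots.toFinset).card ≤
      ((eulerOp β q).roots.toFinset \ insert 0 q.roots.toFinset).card + 1 := by
  have hS : eulerOp β q ≠ 0 := eulerOp_ne_zero β hq (by positivity)
  refine Finset.card_le_sdiff_of_interleaved fun x hx y hy hxy hZ => ?_
  have hvanish : ∀ t ∈ insert 0 q.roots.toFinset, |t| ^ β * q.eval t = 0 := by
    intro t ht
    rcases Finset.mem_insert.1 ht with rfl | ht
    · simp [Real.zero_rpow hβ.ne']
    · rw [(mem_roots hq).1 (Multiset.mem_toFinset.1 ht), mul_zero]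
  have hcont : ContinuousOn (fun t => |t| ^ β * q.eval t) (Set.Icc x y) :=
    ((continuous_abs.rpow_const fun _ => Or.inr hβ.le).mul q.continuous).continuousOn
  have hne : ∀ t ∈ Set.Ioo x y, t ≠ 0 := fun t ht h0 =>
    hZ 0 (Finset.mem_insert_self _ _) (h0 ▸ ht)
  obtain ⟨z, hz, hSz⟩ := exists_hasDerivAt_eq_zero hxy hcont
    ((hvanish x hx).trans (hvanish y hy).symm)
    fun t ht => hasDerivAt_abs_rpow_mul_eval β q (hne t ht)
  have hz0 := hne z hz
  refine ⟨z, Multiset.mem_toFinset.2 ((mem_roots hS).2 ?_), hz⟩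
  simpa [hz0, Real.rpow_pos_of_pos (abs_pos.2 hz0) β |>.ne'] using hSz

theorem card_roots_le_card_roots_eulerOp {β : ℝ} (hβ : 0 < β) {q : ℝ[X]} (hq : q ≠ 0) :
    Multiset.card q.roots ≤ Multiset.card (eulerOp β q).roots := by
  classical
  set Z := insert 0 q.roots.toFinset
  set S := eulerOp β q
  have hS : S ≠ 0 := eulerOp_ne_zero β hq (by positivity)
  have hle : q.roots ≤ S.roots.filter (· ∈ Z) + (Z.erase 0).val := by
    refine Multiset.le_iff_count.2 fun x => ?_
    rw [Multiset.count_add, Multiset.count_filter, Multiset.count_eq_of_nodup (Z.erase 0).nodup,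
      count_roots, count_roots]
    simp only [Z, Finset.mem_val, Finset.mem_erase, Finset.mem_insert, Multiset.mem_toFinset]
    by_cases hx0 : x = 0
    · subst hx0
      simpa using rootMultiplicity_zero_le_rootMultiplicity_eulerOp hS
    by_cases hx : x ∈ q.roots
    · simpa [hx0, hx] using rootMultiplicity_le_rootMultiplicity_eulerOp_add_one hS x
    · rw [rootMultiplicity_eq_zero fun h => hx ((mem_roots hq).2 h)]
      exact Nat.zero_le _
  have hnew : (Z.erase 0).card ≤ Multiset.card (S.roots.filter (· ∉ Z)) := by
    have := card_insert_zero_roots_toFinset_le_card_roots_eulerOp_sdiff_succ hβ hq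
    rw [Finset.card_erase_of_mem (Finset.mem_insert_self _ _)]
    refine (Nat.sub_le_of_le_add this).trans ?_
    rw [Finset.sdiff_eq_filter, ← Multiset.toFinset_filter]
    exact Multiset.toFinset_card_le _
  calc Multiset.card q.roots
      ≤ Multiset.card (S.roots.filter (· ∈ Z)) + (Z.erase 0).card :=
        (Multiset.card_le_card hle).trans_eq (Multiset.card_add _ _)
    _ ≤ Multiset.card (S.roots.filter (· ∈ Z)) + Multiset.card (S.roots.filter (· ∉ Z)) := by
        gcongr
    _ = Multiset.card S.roots := by rw [← Multiset.card_add, Multiset.filter_add_not]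

theorem roots_map_complex_filter_im_eq_zero (p : ℝ[X]) :
    (p.map (algebraMap ℝ ℂ)).roots.filter (fun z => ¬z.im ≠ 0) =
      p.roots.map (algebraMap ℝ ℂ) := by
  have hinj := (algebraMap ℝ ℂ).injective
  ext z
  rw [Multiset.count_filter]
  by_cases hz : z.im = 0
  · obtain ⟨r, rfl⟩ : ∃ r : ℝ, algebraMap ℝ ℂ r = z := ⟨z.re, Complex.ext rfl hz.symm⟩
    rw [if_pos (not_not.2 hz), Multiset.count_map_eq_count' _ _ hinj, count_roots, count_roots,
      eq_rootMultiplicity_map hinj]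
  · rw [if_neg (not_not.not.2 hz), eq_comm, Multiset.count_eq_zero]
    rintro hmem
    obtain ⟨r, -, rfl⟩ := Multiset.mem_map.1 hmem
    simp at hz

theorem card_roots_map_complex_filter_im_ne_zero (p : ℝ[X]) :
    Multiset.card ((p.map (algebraMap ℝ ℂ)).roots.filter (fun z => z.im ≠ 0)) =
      p.natDegree - Multiset.card p.roots := by
  have := congrArg Multiset.card
    (Multiset.filter_add_not (fun z : ℂ => z.im ≠ 0) (p.map (algebraMap ℝ ℂ)).roots)
  rw [Multiset.card_add, roots_map_complex_filter_im_eq_zero, Multiset.card_map,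
    IsAlgClosed.card_roots_eq_natDegree (k := ℂ), natDegree_map] at this
  omega

end Polynomial

/-- For `α ≥ 0`, the operator `Ω_α p = -(α p + x p')'` is complex zero decreasing:
the number of non-real zeros of `Ω_α p` is at most the number of non-real zeros of `p`. -/
theorem stmt_19 (α : ℝ) (hα : 0 ≤ α) (p : Polynomial ℝ) :
    (((-(Polynomial.derivative
          (Polynomial.C α * p + Polynomial.X * Polynomial.derivative p))).map
        (algebraMap ℝ ℂ)).roots.filter (fun z : ℂ => z.im ≠ 0)).card
      ≤ ((p.map (algebraMap ℝ ℂ)).roots.filter (fun z : ℂ => z.im ≠ 0)).card := by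
  rcases eq_or_ne (derivative p) 0 with hq | hq
  · simp [hq]
  rw [derivative_C_mul_add_X_mul_derivative, Polynomial.map_neg, roots_neg,
    card_roots_map_complex_filter_im_ne_zero, card_roots_map_complex_filter_im_ne_zero]
  have hroots := card_roots_le_card_roots_eulerOp (by positivity : 0 < α + 1) hq
  have hrolle := card_roots_le_derivative p
  have hdegS := natDegree_eulerOp_le (α + 1) (derivative p)
  have hdegq := natDegree_derivative_le p
  have hcardS := card_roots' (eulerOp (α + 1) (derivative p))
  omega
end
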